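/- arXiv:1203.2238 — 4 statements merged into one kernel-verified Lean document; each statement's English description precedes it below -/
import Mathlib

section
/- Mixed anisoperimetric inequality: for any two anisotropy functions σ, μ and any closed curve Γ, L_σ(Γ)·L_μ(Γ) ≥ K_{σ,μ}·A(Γ), where K_{σ,μ} = 2√(|W_σ|·|W_μ|) + L_σ(∂W_μ). -/
open Real

/-- The Wulff area `|W_σ| = (1/2)∫₀^{2π} σ(ν)(σ(ν)+σ''(ν)) dν`. -/
noncomputable def wulffArea (σ : ℝ → ℝ) : ℝ :=
  (1 / 2) * ∫ ν in (0:ℝ)..(2 * π), σ ν * (σ ν + deriv (deriv σ) ν)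

/-- The mixed Wulff energy `L_σ(∂W_μ) = ∫₀^{2π} σ(ν)(μ(ν)+μ''(ν)) dν`. -/
noncomputable def mixedWulffEnergy (σ μ : ℝ → ℝ) : ℝ :=
  ∫ ν in (0:ℝ)..(2 * π), σ ν * (μ ν + deriv (deriv μ) ν)

open intervalIntegral ContDiff


section helpers

lemma periodic_of_hasDerivAt {f f' : ℝ → ℝ} {T : ℝ} (hper : ∀ t, f (t + T) = f t)
    (hf : ∀ t, HasDerivAt f (f' t) t) (t : ℝ) : f' (t + T) = f' t := by
  have h1 : HasDerivAt (fun s => f (s + T)) (f' (t + T)) t := by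
    simpa using (hf (t + T)).comp_add_const
  have h2 : (fun s => f (s + T)) = f := funext hper
  rw [h2] at h1
  exact h1.unique (hf t)

variable {ρ : ℝ → ℝ}

lemma rho_hasDeriv (hρ : ContDiff ℝ ∞ ρ) (t : ℝ) : HasDerivAt ρ (deriv ρ t) t :=
  ((hρ.differentiable (by norm_num)) t).hasDerivAt

lemma rho_deriv_contDiff (hρ : ContDiff ℝ ∞ ρ) : ContDiff ℝ ∞ (deriv ρ) :=
  (contDiff_infty_iff_deriv.mp hρ).2

lemma rho_deriv_hasDeriv (hρ : ContDiff ℝ ∞ ρ) (t : ℝ) :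
    HasDerivAt (deriv ρ) (deriv (deriv ρ) t) t :=
  ((rho_deriv_contDiff hρ).differentiable (by norm_num) t).hasDerivAt

lemma rho_deriv2_continuous (hρ : ContDiff ℝ ∞ ρ) : Continuous (deriv (deriv ρ)) :=
  ((rho_deriv_contDiff (rho_deriv_contDiff hρ)).continuous)

/-- The key integral identity behind the support inequality. -/
lemma ksi_identity (hρ : ContDiff ℝ ∞ ρ) (θ φ : ℝ) :
    ∫ t in θ..φ, (ρ t + deriv (deriv ρ) t) * Real.sin (φ - t)
      = ρ φ - ρ θ * Real.cos (φ - θ) - deriv ρ θ * Real.sin (φ - θ) := by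
  have hc : Continuous ρ := hρ.continuous
  have hc' : Continuous (deriv ρ) := (rho_deriv_contDiff hρ).continuous
  have hc'' : Continuous (deriv (deriv ρ)) := rho_deriv2_continuous hρ
  have hsin : ∀ t : ℝ, HasDerivAt (fun s => Real.sin (φ - s)) (-Real.cos (φ - t)) t := by
    intro t
    have h1 : HasDerivAt (fun s : ℝ => φ - s) (-1) t := by
      simpa using (hasDerivAt_id' t).const_sub φ
    exact ((Real.hasDerivAt_sin (φ - t)).comp t h1).congr_deriv (by ring)
  have hcos : ∀ t : ℝ, HasDerivAt (fun s => Real.cos (φ - s)) (Real.sin (φ - t)) t := by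
    intro t
    have h1 : HasDerivAt (fun s : ℝ => φ - s) (-1) t := by
      simpa using (hasDerivAt_id' t).const_sub φ
    exact ((Real.hasDerivAt_cos (φ - t)).comp t h1).congr_deriv (by ring)
  have I1 : ∫ t in θ..φ, Real.sin (φ - t) * deriv (deriv ρ) t
      = Real.sin (φ - φ) * deriv ρ φ - Real.sin (φ - θ) * deriv ρ θ
        - ∫ t in θ..φ, (-Real.cos (φ - t)) * deriv ρ t := by
    apply intervalIntegral.integral_mul_deriv_eq_deriv_mul_of_hasDerivAt
    · exact (Real.continuous_sin.comp (continuous_const.sub continuous_id)).continuousOn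
    · exact hc'.continuousOn
    · intro t _; exact hsin t
    · intro t _; exact rho_deriv_hasDeriv hρ t
    · exact ((Real.continuous_cos.comp (continuous_const.sub continuous_id)).neg).intervalIntegrable _ _
    · exact hc''.intervalIntegrable _ _
  have I2 : ∫ t in θ..φ, Real.cos (φ - t) * deriv ρ t
      = Real.cos (φ - φ) * ρ φ - Real.cos (φ - θ) * ρ θ
        - ∫ t in θ..φ, Real.sin (φ - t) * ρ t := by
    apply intervalIntegral.integral_mul_deriv_eq_deriv_mul_of_hasDerivAt
    · exact (Real.continuous_cos.comp (continuous_const.sub continuous_id)).continuousOn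
    · exact hc.continuousOn
    · intro t _; exact hcos t
    · intro t _; exact rho_hasDeriv hρ t
    · exact (Real.continuous_sin.comp (continuous_const.sub continuous_id)).intervalIntegrable _ _
    · exact hc'.intervalIntegrable _ _
  have hsplit : ∫ t in θ..φ, (ρ t + deriv (deriv ρ) t) * Real.sin (φ - t)
      = (∫ t in θ..φ, Real.sin (φ - t) * ρ t) + ∫ t in θ..φ, Real.sin (φ - t) * deriv (deriv ρ) t := by
    rw [← intervalIntegral.integral_add]
    · congr 1; ext t; ring
    · exact ((Real.continuous_sin.comp (continuous_const.sub continuous_id)).mul hc).intervalIntegrable _ _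
    · exact ((Real.continuous_sin.comp (continuous_const.sub continuous_id)).mul hc'').intervalIntegrable _ _
  have hneg : ∫ t in θ..φ, (-Real.cos (φ - t)) * deriv ρ t
      = -∫ t in θ..φ, Real.cos (φ - t) * deriv ρ t := by
    rw [← intervalIntegral.integral_neg]; congr 1; ext t; ring
  rw [hsplit, I1, hneg, I2]
  simp [Real.sin_zero, Real.cos_zero]
  ring

lemma wulffArea_def' (ρ : ℝ → ℝ) :
    wulffArea ρ = (1 / 2) * ∫ t in (0:ℝ)..(2 * π), ρ t * (ρ t + deriv (deriv ρ) t) := rfl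

lemma mixedWulffEnergy_def' (σ μ : ℝ → ℝ) :
    mixedWulffEnergy σ μ = ∫ t in (0:ℝ)..(2 * π), σ t * (μ t + deriv (deriv μ) t) := rfl

end helpers
section ksi

variable {ρ : ℝ → ℝ}

lemma ksi_core (hρ : ContDiff ℝ ∞ ρ)
    (hconv : ∀ t, 0 < ρ t + deriv (deriv ρ) t) {θ φ : ℝ}
    (h1 : θ - π ≤ φ) (h2 : φ ≤ θ + π) :
    ρ θ * Real.cos (φ - θ) + deriv ρ θ * Real.sin (φ - θ) ≤ ρ φ := by
  have key := ksi_identity hρ θ φ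
  have hI : 0 ≤ ∫ t in θ..φ, (ρ t + deriv (deriv ρ) t) * Real.sin (φ - t) := by
    rcases le_total θ φ with hle | hle
    · apply intervalIntegral.integral_nonneg hle
      intro t ht
      have hs : 0 ≤ Real.sin (φ - t) := by
        apply Real.sin_nonneg_of_nonneg_of_le_pi
        · linarith [ht.2]
        · linarith [ht.1]
      exact mul_nonneg (hconv t).le hs
    · have h0 : 0 ≤ ∫ t in φ..θ, -((ρ t + deriv (deriv ρ) t) * Real.sin (φ - t)) := by
        apply intervalIntegral.integral_nonneg hle
        intro t ht
        have hs : Real.sin (φ - t) ≤ 0 := by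
          have h1 : 0 ≤ Real.sin (t - φ) := by
            apply Real.sin_nonneg_of_nonneg_of_le_pi
            · linarith [ht.1]
            · linarith [ht.2]
          have hrw : Real.sin (φ - t) = -Real.sin (t - φ) := by
            rw [← Real.sin_neg]; ring_nf
          linarith
        nlinarith [(hconv t).le]
      rw [integral_neg] at h0
      rw [show (∫ t in θ..φ, (ρ t + deriv (deriv ρ) t) * Real.sin (φ - t))
            = -∫ t in φ..θ, (ρ t + deriv (deriv ρ) t) * Real.sin (φ - t) from integral_symm φ θ]
      linarith
  linarith [key, hI]

lemma ksi (hρ : ContDiff ℝ ∞ ρ) (hper : ∀ t, ρ (t + 2*π) = ρ t)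
    (hconv : ∀ t, 0 < ρ t + deriv (deriv ρ) t) (θ φ : ℝ) :
    ρ θ * Real.cos (φ - θ) + deriv ρ θ * Real.sin (φ - θ) ≤ ρ φ := by
  have hper' : Function.Periodic ρ (2*π) := hper
  set k : ℤ := ⌊(θ + π - φ) / (2*π)⌋ with hk
  have h2π : (0:ℝ) < 2*π := by positivity
  have hfl1 : (k:ℝ) ≤ (θ + π - φ) / (2*π) := Int.floor_le _
  have hfl2 : (θ + π - φ) / (2*π) < k + 1 := Int.lt_floor_add_one _
  have hb1 : (k:ℝ) * (2*π) ≤ θ + π - φ := (le_div_iff₀ h2π).mp hfl1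
  have hb2 : θ + π - φ < ((k:ℝ) + 1) * (2*π) := by
    rw [div_lt_iff₀ h2π] at hfl2; linarith
  set φ' := φ + (k:ℝ) * (2*π) with hφ'
  have hcore := ksi_core hρ hconv (θ := θ) (φ := φ')
      (by simp only [hφ']; nlinarith) (by simp only [hφ']; linarith)
  have hρeq : ρ φ' = ρ φ := (hper'.int_mul k) φ
  have hcos : Real.cos (φ' - θ) = Real.cos (φ - θ) := by
    have : φ' - θ = (φ - θ) + (k:ℝ) * (2*π) := by ring
    rw [this, Real.cos_add_int_mul_two_pi]
  have hsin : Real.sin (φ' - θ) = Real.sin (φ - θ) := by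
    have : φ' - θ = (φ - θ) + (k:ℝ) * (2*π) := by ring
    rw [this, Real.sin_add_int_mul_two_pi]
  rw [hρeq, hcos, hsin] at hcore
  exact hcore

end ksi
section wulffbdry

lemma hasDerivAt_fst {x : ℝ → ℝ × ℝ} {D : ℝ × ℝ} {u : ℝ} (h : HasDerivAt x D u) :
    HasDerivAt (fun u => (x u).1) D.1 u := by
  have h1 := (hasFDerivAt_fst (𝕜 := ℝ) (p := x u)).comp u h.hasFDerivAt
  have h2 := h1.hasDerivAt
  simpa [Function.comp_def] using h2

lemma hasDerivAt_snd {x : ℝ → ℝ × ℝ} {D : ℝ × ℝ} {u : ℝ} (h : HasDerivAt x D u) :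
    HasDerivAt (fun u => (x u).2) D.2 u := by
  have h1 := (hasFDerivAt_snd (𝕜 := ℝ) (p := x u)).comp u h.hasFDerivAt
  have h2 := h1.hasDerivAt
  simpa [Function.comp_def] using h2

noncomputable def wulffW1 (ρ : ℝ → ℝ) (θ : ℝ) : ℝ := ρ θ * Real.sin θ + deriv ρ θ * Real.cos θ

noncomputable def wulffW2 (ρ : ℝ → ℝ) (θ : ℝ) : ℝ := -ρ θ * Real.cos θ + deriv ρ θ * Real.sin θ

variable {ρ : ℝ → ℝ}

lemma wulffW1_hasDeriv (hρ : ContDiff ℝ ∞ ρ) (θ : ℝ) :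
    HasDerivAt (wulffW1 ρ) ((ρ θ + deriv (deriv ρ) θ) * Real.cos θ) θ := by
  have h1 := ((rho_hasDeriv hρ θ).mul (Real.hasDerivAt_sin θ)).add
    ((rho_deriv_hasDeriv hρ θ).mul (Real.hasDerivAt_cos θ))
  exact h1.congr_deriv (by ring)

lemma wulffW2_hasDeriv (hρ : ContDiff ℝ ∞ ρ) (θ : ℝ) :
    HasDerivAt (wulffW2 ρ) ((ρ θ + deriv (deriv ρ) θ) * Real.sin θ) θ := by
  have h1 := (((rho_hasDeriv hρ θ).neg.mul (Real.hasDerivAt_cos θ))).add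
    ((rho_deriv_hasDeriv hρ θ).mul (Real.hasDerivAt_sin θ))
  exact h1.congr_deriv (by simp only [Pi.neg_apply]; ring)

lemma wulffW1_continuous (hρ : ContDiff ℝ ∞ ρ) : Continuous (wulffW1 ρ) := by
  unfold wulffW1
  exact (hρ.continuous.mul Real.continuous_sin).add
    ((rho_deriv_contDiff hρ).continuous.mul Real.continuous_cos)

lemma wulffW2_continuous (hρ : ContDiff ℝ ∞ ρ) : Continuous (wulffW2 ρ) := by
  unfold wulffW2
  exact ((hρ.continuous.neg.mul Real.continuous_cos)).add
    ((rho_deriv_contDiff hρ).continuous.mul Real.continuous_sin)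

lemma deriv_periodic (hρ : ContDiff ℝ ∞ ρ) (hper : ∀ t, ρ (t + 2*π) = ρ t) :
    ∀ t, deriv ρ (t + 2*π) = deriv ρ t :=
  periodic_of_hasDerivAt hper (rho_hasDeriv hρ)

lemma wulffW1_periodic (hρ : ContDiff ℝ ∞ ρ) (hper : ∀ t, ρ (t + 2*π) = ρ t) (θ : ℝ) :
    wulffW1 ρ (θ + 2*π) = wulffW1 ρ θ := by
  unfold wulffW1
  rw [hper, deriv_periodic hρ hper, Real.sin_add_two_pi, Real.cos_add_two_pi]

lemma wulffW2_periodic (hρ : ContDiff ℝ ∞ ρ) (hper : ∀ t, ρ (t + 2*π) = ρ t) (θ : ℝ) :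
    wulffW2 ρ (θ + 2*π) = wulffW2 ρ θ := by
  unfold wulffW2
  rw [hper, deriv_periodic hρ hper, Real.sin_add_two_pi, Real.cos_add_two_pi]

/-- The support inequality for the Wulff boundary point `w(θ)` in the normal
direction `(sin φ, -cos φ)`. -/
lemma wulff_support (hρ : ContDiff ℝ ∞ ρ) (hper : ∀ t, ρ (t + 2*π) = ρ t)
    (hconv : ∀ t, 0 < ρ t + deriv (deriv ρ) t) (θ φ : ℝ) :
    wulffW1 ρ θ * Real.sin φ - wulffW2 ρ θ * Real.cos φ ≤ ρ φ := by
  have hid : wulffW1 ρ θ * Real.sin φ - wulffW2 ρ θ * Real.cos φ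
      = ρ θ * Real.cos (φ - θ) + deriv ρ θ * Real.sin (φ - θ) := by
    unfold wulffW1 wulffW2
    rw [Real.cos_sub, Real.sin_sub]
    ring
  rw [hid]
  exact ksi hρ hper hconv θ φ

lemma wulff_support_self (θ : ℝ) :
    wulffW1 ρ θ * Real.sin θ - wulffW2 ρ θ * Real.cos θ = ρ θ := by
  unfold wulffW1 wulffW2
  have h := Real.sin_sq_add_cos_sq θ
  linear_combination ρ θ * h

/-- The (signed) area of the Wulff shape as a boundary integral. -/
lemma wulff_area_eq (hρ : ContDiff ℝ ∞ ρ) (hper : ∀ t, ρ (t + 2*π) = ρ t) :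
    -∫ θ in (0:ℝ)..2*π, wulffW2 ρ θ * ((ρ θ + deriv (deriv ρ) θ) * Real.cos θ)
      = wulffArea ρ := by
  have hW1c := wulffW1_continuous hρ
  have hW2c := wulffW2_continuous hρ
  have hc : Continuous ρ := hρ.continuous
  have hc'' : Continuous (deriv (deriv ρ)) := rho_deriv2_continuous hρ
  -- ∫ (W1 W2)' = 0
  have hprod : ∀ θ : ℝ, HasDerivAt (fun t => wulffW1 ρ t * wulffW2 ρ t)
      (((ρ θ + deriv (deriv ρ) θ) * Real.cos θ) * wulffW2 ρ θ
        + wulffW1 ρ θ * ((ρ θ + deriv (deriv ρ) θ) * Real.sin θ)) θ := by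
    intro θ
    exact (wulffW1_hasDeriv hρ θ).mul (wulffW2_hasDeriv hρ θ)
  have hint : Continuous (fun θ => ((ρ θ + deriv (deriv ρ) θ) * Real.cos θ) * wulffW2 ρ θ
        + wulffW1 ρ θ * ((ρ θ + deriv (deriv ρ) θ) * Real.sin θ)) := by
    exact (((hc.add hc'').mul Real.continuous_cos).mul hW2c).add
      (hW1c.mul ((hc.add hc'').mul Real.continuous_sin))
  have hftc : ∫ θ in (0:ℝ)..2*π, (((ρ θ + deriv (deriv ρ) θ) * Real.cos θ) * wulffW2 ρ θ
        + wulffW1 ρ θ * ((ρ θ + deriv (deriv ρ) θ) * Real.sin θ))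
      = wulffW1 ρ (2*π) * wulffW2 ρ (2*π) - wulffW1 ρ 0 * wulffW2 ρ 0 := by
    apply intervalIntegral.integral_eq_sub_of_hasDerivAt (fun θ _ => hprod θ)
    exact hint.intervalIntegrable _ _
  have hzero : wulffW1 ρ (2*π) * wulffW2 ρ (2*π) - wulffW1 ρ 0 * wulffW2 ρ 0 = 0 := by
    have h1 : wulffW1 ρ (2*π) = wulffW1 ρ 0 := by
      have := wulffW1_periodic hρ hper 0; simpa using this
    have h2 : wulffW2 ρ (2*π) = wulffW2 ρ 0 := by
      have := wulffW2_periodic hρ hper 0; simpa using this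
    rw [h1, h2]; ring
  -- pointwise identity: W1 * ((ρ+ρ'') sin θ) - W2 * ((ρ+ρ'') cos θ) = ρ (ρ+ρ'')
  have hpoint : ∀ θ : ℝ, wulffW1 ρ θ * ((ρ θ + deriv (deriv ρ) θ) * Real.sin θ)
      - wulffW2 ρ θ * ((ρ θ + deriv (deriv ρ) θ) * Real.cos θ)
      = ρ θ * (ρ θ + deriv (deriv ρ) θ) := by
    intro θ
    have h := wulff_support_self (ρ := ρ) θ
    linear_combination (ρ θ + deriv (deriv ρ) θ) * h
  -- combine
  have hsplit : ∫ θ in (0:ℝ)..2*π, ρ θ * (ρ θ + deriv (deriv ρ) θ)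
      = (∫ θ in (0:ℝ)..2*π, (((ρ θ + deriv (deriv ρ) θ) * Real.cos θ) * wulffW2 ρ θ
        + wulffW1 ρ θ * ((ρ θ + deriv (deriv ρ) θ) * Real.sin θ)))
        - 2 * ∫ θ in (0:ℝ)..2*π, wulffW2 ρ θ * ((ρ θ + deriv (deriv ρ) θ) * Real.cos θ) := by
    rw [← intervalIntegral.integral_const_mul, ← intervalIntegral.integral_sub]
    · apply intervalIntegral.integral_congr
      intro θ _
      simp only
      linear_combination -(hpoint θ)
    · exact hint.intervalIntegrable _ _
    · exact (continuous_const.mul (hW2c.mul ((hc.add hc'').mul Real.continuous_cos))).intervalIntegrable _ _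
  rw [hftc, hzero] at hsplit
  rw [wulffArea_def']
  linarith
section inverse

lemma branch_inverse {f : ℝ → ℝ} {a b A B : ℝ}
    (hf : ContinuousOn f (Set.Icc a b)) (hinj : Set.InjOn f (Set.Icc a b))
    (himg : f '' (Set.Icc a b) = Set.Icc A B) :
    ∃ Θ : ℝ → ℝ, ContinuousOn Θ (Set.Icc A B) ∧
      (∀ ξ ∈ Set.Icc A B, Θ ξ ∈ Set.Icc a b ∧ f (Θ ξ) = ξ) ∧
      (∀ t ∈ Set.Icc a b, Θ (f t) = t) := by
  classical
  haveI : CompactSpace ↥(Set.Icc a b) := isCompact_iff_compactSpace.mp isCompact_Icc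
  have hmem : ∀ t : ↥(Set.Icc a b), f t.1 ∈ Set.Icc A B := by
    intro t; rw [← himg]; exact Set.mem_image_of_mem f t.2
  set F : ↥(Set.Icc a b) → ↥(Set.Icc A B) := fun t => ⟨f t.1, hmem t⟩ with hF
  have hFc : Continuous F :=
    Continuous.subtype_mk (continuousOn_iff_continuous_restrict.mp hf) _
  have hFinj : Function.Injective F := by
    intro s t hst
    exact Subtype.ext (hinj s.2 t.2 (congrArg Subtype.val hst))
  have hFsurj : Function.Surjective F := by
    rintro ⟨ξ, hξ⟩
    have hξ' : ξ ∈ f '' Set.Icc a b := himg ▸ hξ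
    obtain ⟨t, ht, hft⟩ := hξ'
    exact ⟨⟨t, ht⟩, Subtype.ext hft⟩
  set E : ↥(Set.Icc a b) ≃ ↥(Set.Icc A B) := Equiv.ofBijective F ⟨hFinj, hFsurj⟩ with hE
  have hEc : Continuous (E : ↥(Set.Icc a b) → ↥(Set.Icc A B)) := hFc
  set H : ↥(Set.Icc a b) ≃ₜ ↥(Set.Icc A B) := hEc.homeoOfEquivCompactToT2 with hH
  have hHapp : ∀ t, H t = F t := fun _ => rfl
  refine ⟨fun ξ => if h : ξ ∈ Set.Icc A B then (H.symm ⟨ξ, h⟩ : ℝ) else a, ?_, ?_, ?_⟩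
  · rw [continuousOn_iff_continuous_restrict]
    have heq : (Set.Icc A B).domRestrict
        (fun ξ => if h : ξ ∈ Set.Icc A B then ((H.symm ⟨ξ, h⟩ : ↥(Set.Icc a b)) : ℝ) else a)
        = fun ξ : ↥(Set.Icc A B) => ((H.symm ξ : ↥(Set.Icc a b)) : ℝ) := by
      funext ξ
      rcases ξ with ⟨ξ, hξ⟩
      simp only [Set.domRestrict, dif_pos hξ]
    rw [heq]
    exact continuous_subtype_val.comp H.symm.continuous
  · intro ξ hξ
    refine ⟨by simp only [dif_pos hξ]; exact (H.symm ⟨ξ, hξ⟩).2, ?_⟩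
    simp only [dif_pos hξ]
    have h1 : H (H.symm ⟨ξ, hξ⟩) = ⟨ξ, hξ⟩ := H.apply_symm_apply _
    rw [hHapp] at h1
    exact congrArg Subtype.val h1
  · intro t ht
    have hmem' : f t ∈ Set.Icc A B := himg ▸ Set.mem_image_of_mem f ht
    simp only [dif_pos hmem']
    have h1 : H ⟨t, ht⟩ = ⟨f t, hmem'⟩ := Subtype.ext rfl
    have h2 : H.symm ⟨f t, hmem'⟩ = ⟨t, ht⟩ := by
      rw [← h1]; exact H.symm_apply_apply _
    exact congrArg Subtype.val h2

variable {ρ : ℝ → ℝ}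

lemma branchA_anti (hρ : ContDiff ℝ ∞ ρ) (hconv : ∀ t, 0 < ρ t + deriv (deriv ρ) t) :
    StrictAntiOn (wulffW1 ρ) (Set.Icc (π/2) (3*π/2)) := by
  apply strictAntiOn_of_deriv_neg (convex_Icc _ _) (wulffW1_continuous hρ).continuousOn
  intro θ hθ
  rw [interior_Icc] at hθ
  rw [(wulffW1_hasDeriv hρ θ).deriv]
  have hcos : Real.cos θ < 0 :=
    Real.cos_neg_of_pi_div_two_lt_of_lt hθ.1 (by linarith [hθ.2])
  exact mul_neg_of_pos_of_neg (hconv θ) hcos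

lemma branchB_mono (hρ : ContDiff ℝ ∞ ρ) (hconv : ∀ t, 0 < ρ t + deriv (deriv ρ) t) :
    StrictMonoOn (wulffW1 ρ) (Set.Icc (3*π/2) (5*π/2)) := by
  apply strictMonoOn_of_deriv_pos (convex_Icc _ _) (wulffW1_continuous hρ).continuousOn
  intro θ hθ
  rw [interior_Icc] at hθ
  rw [(wulffW1_hasDeriv hρ θ).deriv]
  have hcos : 0 < Real.cos θ := by
    rw [← Real.cos_sub_two_pi]
    apply Real.cos_pos_of_mem_Ioo
    constructor <;> [linarith [hθ.1]; linarith [hθ.2]]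
  exact mul_pos (hconv θ) hcos

lemma wulffW1_at_half_pi : wulffW1 ρ (π/2) = ρ (π/2) := by
  simp [wulffW1, Real.sin_pi_div_two, Real.cos_pi_div_two]

lemma wulffW1_at_three_half_pi : wulffW1 ρ (3*π/2) = -ρ (3*π/2) := by
  have h : (3*π/2 : ℝ) = π/2 + π := by ring
  rw [wulffW1, h, Real.sin_add_pi, Real.cos_add_pi]
  simp [Real.sin_pi_div_two, Real.cos_pi_div_two]

lemma wulffW1_at_five_half_pi (hρ : ContDiff ℝ ∞ ρ) (hper : ∀ t, ρ (t + 2*π) = ρ t) :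
    wulffW1 ρ (5*π/2) = ρ (π/2) := by
  have h : (5*π/2 : ℝ) = π/2 + 2*π := by ring
  rw [h, wulffW1_periodic hρ hper, wulffW1_at_half_pi]

lemma branchA_img (hρ : ContDiff ℝ ∞ ρ) (hpos : ∀ t, 0 < ρ t)
    (hconv : ∀ t, 0 < ρ t + deriv (deriv ρ) t) :
    wulffW1 ρ '' (Set.Icc (π/2) (3*π/2)) = Set.Icc (-ρ (3*π/2)) (ρ (π/2)) := by
  have hab : (π/2 : ℝ) ≤ 3*π/2 := by linarith [Real.pi_pos]
  have hanti := branchA_anti hρ hconv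
  apply Set.Subset.antisymm
  · rintro ξ ⟨t, ht, rfl⟩
    constructor
    · rw [← wulffW1_at_three_half_pi (ρ := ρ)]
      rcases eq_or_lt_of_le ht.2 with h | h
      · rw [h]
      · exact (hanti ht (Set.right_mem_Icc.mpr hab) h).le
    · rw [← wulffW1_at_half_pi (ρ := ρ)]
      rcases eq_or_lt_of_le ht.1 with h | h
      · rw [← h]
      · exact (hanti (Set.left_mem_Icc.mpr hab) ht h).le
  · have := intermediate_value_Icc' hab (wulffW1_continuous hρ).continuousOn
    rwa [wulffW1_at_half_pi, wulffW1_at_three_half_pi] at this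

lemma branchB_img (hρ : ContDiff ℝ ∞ ρ) (hpos : ∀ t, 0 < ρ t)
    (hconv : ∀ t, 0 < ρ t + deriv (deriv ρ) t) (hper : ∀ t, ρ (t + 2*π) = ρ t) :
    wulffW1 ρ '' (Set.Icc (3*π/2) (5*π/2)) = Set.Icc (-ρ (3*π/2)) (ρ (π/2)) := by
  have hab : (3*π/2 : ℝ) ≤ 5*π/2 := by linarith [Real.pi_pos]
  have hmono := branchB_mono hρ hconv
  apply Set.Subset.antisymm
  · rintro ξ ⟨t, ht, rfl⟩
    constructor
    · rw [← wulffW1_at_three_half_pi (ρ := ρ)]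
      rcases eq_or_lt_of_le ht.1 with h | h
      · rw [← h]
      · exact (hmono (Set.left_mem_Icc.mpr hab) ht h).le
    · rw [← wulffW1_at_five_half_pi hρ hper]
      rcases eq_or_lt_of_le ht.2 with h | h
      · rw [h]
      · exact (hmono ht (Set.right_mem_Icc.mpr hab) h).le
  · have := intermediate_value_Icc hab (wulffW1_continuous hρ).continuousOn
    rwa [wulffW1_at_three_half_pi, wulffW1_at_five_half_pi hρ hper] at this

end inverse
section schmidt

set_option maxHeartbeats 1000000

/-- **Basic anisoperimetric inequality** `L_ρ(Γ)² ≥ 4|W_ρ|·A(Γ)`, proved by an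
anisotropic version of E. Schmidt's proof of the isoperimetric inequality. -/
lemma basic_anisoperimetric
    (ρ : ℝ → ℝ) (hρ : ContDiff ℝ ∞ ρ) (hper : ∀ t, ρ (t + 2*π) = ρ t)
    (hpos : ∀ t, 0 < ρ t) (hconv : ∀ t, 0 < ρ t + deriv (deriv ρ) t)
    (x1 x2 g ν : ℝ → ℝ)
    (hx1per : ∀ u, x1 (u + 1) = x1 u) (hx2per : ∀ u, x2 (u + 1) = x2 u)
    (hg : ∀ u, 0 < g u) (hgc : Continuous g)
    (hx1 : ∀ u, HasDerivAt x1 (g u * Real.cos (ν u)) u)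
    (hx2 : ∀ u, HasDerivAt x2 (g u * Real.sin (ν u)) u)
    (hνc : Continuous ν) (hνper : ∀ u, ν (u + 1) = ν u + 2 * π)
    (hA : 0 < (1/2) * ∫ u in (0:ℝ)..1,
        (x1 u * (g u * Real.sin (ν u)) - x2 u * (g u * Real.cos (ν u)))) :
    4 * wulffArea ρ * ((1/2) * ∫ u in (0:ℝ)..1,
        (x1 u * (g u * Real.sin (ν u)) - x2 u * (g u * Real.cos (ν u))))
      ≤ (∫ u in (0:ℝ)..1, ρ (ν u) * g u)^2 := by
  have hπ := Real.pi_pos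
  have hρc : Continuous ρ := hρ.continuous
  have hρ''c : Continuous (deriv (deriv ρ)) := rho_deriv2_continuous hρ
  have hx1c : Continuous x1 := continuous_iff_continuousAt.mpr fun u => (hx1 u).continuousAt
  have hx2c : Continuous x2 := continuous_iff_continuousAt.mpr fun u => (hx2 u).continuousAt
  have hx1'c : Continuous fun u => g u * Real.cos (ν u) := hgc.mul (Real.continuous_cos.comp hνc)
  have hx2'c : Continuous fun u => g u * Real.sin (ν u) := hgc.mul (Real.continuous_sin.comp hνc)
  have hx1p : Function.Periodic x1 1 := hx1per
  have hx2p : Function.Periodic x2 1 := hx2per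
  have hcosper : ∀ u, Real.cos (ν (u+1)) = Real.cos (ν u) := by
    intro u; rw [hνper u]; exact Real.cos_add_two_pi _
  have hsinper : ∀ u, Real.sin (ν (u+1)) = Real.sin (ν u) := by
    intro u; rw [hνper u]; exact Real.sin_add_two_pi _
  have hgper : ∀ u, g (u + 1) = g u := by
    intro u
    have h1 := periodic_of_hasDerivAt (T := 1) hx1per hx1 u
    have h2 := periodic_of_hasDerivAt (T := 1) hx2per hx2 u
    rw [hcosper u] at h1
    rw [hsinper u] at h2
    linear_combination Real.cos (ν u) * h1 + Real.sin (ν u) * h2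
      - (g (u+1) - g u) * (Real.sin_sq_add_cos_sq (ν u))
  -- the enclosed area and the anisotropic length
  set Av : ℝ := (1/2) * ∫ u in (0:ℝ)..1,
      (x1 u * (g u * Real.sin (ν u)) - x2 u * (g u * Real.cos (ν u))) with hAvdef
  set L : ℝ := ∫ u in (0:ℝ)..1, ρ (ν u) * g u with hLdef
  -- extrema of x1
  obtain ⟨uM, huMmem, huMmax⟩ :=
    isCompact_Icc.exists_isMaxOn (Set.nonempty_Icc.mpr zero_le_one) hx1c.continuousOn
  have hM' : ∀ u, x1 u ≤ x1 uM := by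
    intro u
    have heq : x1 (u - (⌊u⌋ : ℝ) * 1) = x1 u := hx1p.sub_int_mul_eq ⌊u⌋
    have hmem : u - (⌊u⌋ : ℝ) * 1 ∈ Set.Icc (0:ℝ) 1 := by
      constructor
      · simp only [mul_one]; linarith [Int.floor_le u]
      · simp only [mul_one]; linarith [Int.lt_floor_add_one u]
    calc x1 u = x1 (u - (⌊u⌋ : ℝ) * 1) := heq.symm
    _ ≤ x1 uM := huMmax hmem
  obtain ⟨um, hummem, hummin⟩ :=
    isCompact_Icc.exists_isMinOn (Set.nonempty_Icc.mpr (by linarith : uM ≤ uM + 1))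
      hx1c.continuousOn
  have hm' : ∀ u, x1 um ≤ x1 u := by
    intro u
    have h1 : uM ≤ u + (⌈uM - u⌉ : ℝ) := by linarith [Int.le_ceil (uM - u)]
    have h2 : u + (⌈uM - u⌉ : ℝ) ≤ uM + 1 := by linarith [Int.ceil_lt_add_one (uM - u)]
    have heq : x1 (u + (⌈uM - u⌉ : ℝ) * 1) = x1 u := (hx1p.int_mul ⌈uM - u⌉) u
    calc x1 um ≤ x1 (u + (⌈uM - u⌉ : ℝ)) := hummin ⟨h1, h2⟩
    _ = x1 (u + (⌈uM - u⌉ : ℝ) * 1) := by rw [mul_one]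
    _ = x1 u := heq
  set M : ℝ := x1 uM with hMdef
  set m : ℝ := x1 um with hmdef
  -- the identity ∫ x1·x2' = Av, and ∫ x2' = 0
  have hint_x2' : ∀ a : ℝ, ∫ u in a..(a+1), g u * Real.sin (ν u) = 0 := by
    intro a
    rw [intervalIntegral.integral_eq_sub_of_hasDerivAt (fun u _ => hx2 u)
      (hx2'c.intervalIntegrable _ _)]
    rw [hx2per a]; ring
  have hprod_ftc : ∫ u in (0:ℝ)..1,
      (g u * Real.cos (ν u) * x2 u + x1 u * (g u * Real.sin (ν u))) = 0 := by
    rw [intervalIntegral.integral_eq_sub_of_hasDerivAt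
      (f := fun u => x1 u * x2 u) (fun u _ => (hx1 u).mul (hx2 u))
      (((hx1'c.mul hx2c).add (hx1c.mul hx2'c)).intervalIntegrable _ _)]
    have e1 : x1 1 = x1 0 := by have := hx1per 0; simpa using this
    have e2 : x2 1 = x2 0 := by have := hx2per 0; simpa using this
    rw [e1, e2]; ring
  have hAv_eq : ∫ u in (0:ℝ)..1, x1 u * (g u * Real.sin (ν u)) = Av := by
    have hsub : ∫ u in (0:ℝ)..1,
        (x1 u * (g u * Real.sin (ν u)) - x2 u * (g u * Real.cos (ν u)))
        = (∫ u in (0:ℝ)..1, x1 u * (g u * Real.sin (ν u)))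
          - ∫ u in (0:ℝ)..1, x2 u * (g u * Real.cos (ν u)) := by
      apply intervalIntegral.integral_sub
      · exact (hx1c.mul hx2'c).intervalIntegrable _ _
      · exact (hx2c.mul hx1'c).intervalIntegrable _ _
    have hadd : ∫ u in (0:ℝ)..1,
        (g u * Real.cos (ν u) * x2 u + x1 u * (g u * Real.sin (ν u)))
        = (∫ u in (0:ℝ)..1, g u * Real.cos (ν u) * x2 u)
          + ∫ u in (0:ℝ)..1, x1 u * (g u * Real.sin (ν u)) := by
      apply intervalIntegral.integral_add
      · exact (hx1'c.mul hx2c).intervalIntegrable _ _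
      · exact (hx1c.mul hx2'c).intervalIntegrable _ _
    have hcomm : ∫ u in (0:ℝ)..1, g u * Real.cos (ν u) * x2 u
        = ∫ u in (0:ℝ)..1, x2 u * (g u * Real.cos (ν u)) := by
      apply intervalIntegral.integral_congr; intro u _; ring
    rw [hadd, hcomm] at hprod_ftc
    rw [hAvdef, hsub]
    linarith
  -- m < M, else the area would vanish
  have hmM : m < M := by
    by_contra hcon
    push_neg at hcon
    have hconst : ∀ u, x1 u = m := fun u => le_antisymm (le_trans (hM' u) hcon) (hm' u)
    have hgc0 : ∀ u, g u * Real.cos (ν u) = 0 := by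
      intro u
      have h0 : HasDerivAt x1 0 u := by
        have hx1e : x1 = fun _ => m := funext hconst
        rw [hx1e]; exact hasDerivAt_const u m
      exact (hx1 u).unique h0
    have h2A : ∫ u in (0:ℝ)..1,
        (x1 u * (g u * Real.sin (ν u)) - x2 u * (g u * Real.cos (ν u)))
        = ∫ u in (0:ℝ)..1, m * (g u * Real.sin (ν u)) := by
      apply intervalIntegral.integral_congr; intro u _
      simp only [hconst u, hgc0 u, mul_zero, sub_zero]
    rw [hAvdef] at hA
    rw [h2A, intervalIntegral.integral_const_mul] at hA
    have h00 := hint_x2' 0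
    simp only [zero_add] at h00
    rw [h00] at hA
    simp at hA
  -- scaling parameters
  have hS : 0 < ρ (π/2) + ρ (3*π/2) := add_pos (hpos _) (hpos _)
  set r : ℝ := (M - m) / (ρ (π/2) + ρ (3*π/2)) with hrdef
  have hr : 0 < r := div_pos (by linarith) hS
  have hrS : r * (ρ (π/2) + ρ (3*π/2)) = M - m := div_mul_cancel₀ _ (ne_of_gt hS)
  set c : ℝ := m + r * ρ (3*π/2) with hcdef
  set hh : ℝ → ℝ := fun u => (x1 u - c) / r with hhdef
  have hhderiv : ∀ u, HasDerivAt hh (g u * Real.cos (ν u) / r) u :=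
    fun u => ((hx1 u).sub_const c).div_const r
  have hhc : Continuous hh := (hx1c.sub continuous_const).div_const r
  have hhM : hh uM = ρ (π/2) := by
    simp only [hhdef]
    rw [div_eq_iff (ne_of_gt hr), hcdef]
    linear_combination -hrS
  have hhm : hh um = -ρ (3*π/2) := by
    simp only [hhdef]
    rw [div_eq_iff (ne_of_gt hr), hcdef]
    ring
  have hhper : hh (uM + 1) = ρ (π/2) := by
    simp only [hhdef]
    rw [hx1per uM]
    rw [div_eq_iff (ne_of_gt hr), hcdef]
    linear_combination -hrS
  have hrange : ∀ u, hh u ∈ Set.Icc (-ρ (3*π/2)) (ρ (π/2)) := by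
    intro u
    constructor
    · simp only [hhdef]
      rw [le_div_iff₀ hr, hcdef]
      linarith only [hm' u]
    · simp only [hhdef]
      rw [div_le_iff₀ hr, hcdef]
      linarith only [hM' u, hrS]
  -- ordering of the splitting points
  have huMum : uM < um := by
    rcases lt_or_eq_of_le hummem.1 with h | h
    · exact h
    · exfalso
      have hMm2 : M = m := by rw [hMdef, hmdef, h]
      linarith
  have humU : um < uM + 1 := by
    rcases lt_or_eq_of_le hummem.2 with h | h
    · exact h
    · exfalso
      have hMm2 : m = M := by rw [hmdef, hMdef, h, hx1per uM]
      linarith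
  -- branch inverses
  obtain ⟨ΘA, hΘAc, hΘAmem, hΘAleft⟩ := branch_inverse
    (wulffW1_continuous hρ).continuousOn ((branchA_anti hρ hconv).injOn)
    (branchA_img hρ hpos hconv)
  obtain ⟨ΘB, hΘBc, hΘBmem, hΘBleft⟩ := branch_inverse
    (wulffW1_continuous hρ).continuousOn ((branchB_mono hρ hconv).injOn)
    (branchB_img hρ hpos hconv hper)
  set FA : ℝ → ℝ := fun ξ => wulffW2 ρ (ΘA ξ) with hFAdef
  set FB : ℝ → ℝ := fun ξ => wulffW2 ρ (ΘB ξ) with hFBdef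
  have hFAc : ContinuousOn FA (Set.Icc (-ρ (3*π/2)) (ρ (π/2))) :=
    (wulffW2_continuous hρ).comp_continuousOn hΘAc
  have hFBc : ContinuousOn FB (Set.Icc (-ρ (3*π/2)) (ρ (π/2))) :=
    (wulffW2_continuous hρ).comp_continuousOn hΘBc
  have hFAhh : Continuous fun u => FA (hh u) := hFAc.comp_continuous hhc hrange
  have hFBhh : Continuous fun u => FB (hh u) := hFBc.comp_continuous hhc hrange
  -- substitution on arc A
  have himage1 : ∀ a b : ℝ, hh '' (Set.uIcc a b) ⊆ Set.Icc (-ρ (3*π/2)) (ρ (π/2)) := by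
    rintro a b ξ ⟨u, _, rfl⟩; exact hrange u
  have hsubA : ∫ u in uM..um, (g u * Real.cos (ν u) / r) • ((FA ∘ hh) u)
      = ∫ ξ in hh uM..hh um, FA ξ :=
    intervalIntegral.integral_comp_smul_deriv' (fun u _ => hhderiv u)
      (hx1'c.div_const r).continuousOn (hFAc.mono (himage1 uM um))
  have hsubB : ∫ u in um..(uM+1), (g u * Real.cos (ν u) / r) • ((FB ∘ hh) u)
      = ∫ ξ in hh um..hh (uM+1), FB ξ :=
    intervalIntegral.integral_comp_smul_deriv' (fun u _ => hhderiv u)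
      (hx1'c.div_const r).continuousOn (hFBc.mono (himage1 um (uM+1)))
  have harcA : ∫ u in uM..um, (r * FA (hh u)) * (g u * Real.cos (ν u))
      = r^2 * ∫ ξ in (ρ (π/2))..(-ρ (3*π/2)), FA ξ := by
    have h1 : ∫ u in uM..um, (r * FA (hh u)) * (g u * Real.cos (ν u))
        = r^2 * ∫ u in uM..um, (g u * Real.cos (ν u) / r) • ((FA ∘ hh) u) := by
      rw [← intervalIntegral.integral_const_mul]
      apply intervalIntegral.integral_congr; intro u _
      simp only [Function.comp, smul_eq_mul]
      field_simp
    rw [h1, hsubA, hhM, hhm]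
  have harcB : ∫ u in um..(uM+1), (r * FB (hh u)) * (g u * Real.cos (ν u))
      = r^2 * ∫ ξ in (-ρ (3*π/2))..(ρ (π/2)), FB ξ := by
    have h1 : ∫ u in um..(uM+1), (r * FB (hh u)) * (g u * Real.cos (ν u))
        = r^2 * ∫ u in um..(uM+1), (g u * Real.cos (ν u) / r) • ((FB ∘ hh) u) := by
      rw [← intervalIntegral.integral_const_mul]
      apply intervalIntegral.integral_congr; intro u _
      simp only [Function.comp, smul_eq_mul]
      field_simp
    rw [h1, hsubB, hhm, hhper]
  -- substitution to the Wulff boundary parametrization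
  have himgA' : ContinuousOn FA (wulffW1 ρ '' (Set.uIcc (π/2) (3*π/2))) := by
    rw [Set.uIcc_of_le (by linarith), branchA_img hρ hpos hconv]; exact hFAc
  have himgB' : ContinuousOn FB (wulffW1 ρ '' (Set.uIcc (3*π/2) (5*π/2))) := by
    rw [Set.uIcc_of_le (by linarith), branchB_img hρ hpos hconv hper]; exact hFBc
  have hsubA2 : ∫ θ in (π/2)..(3*π/2),
        ((ρ θ + deriv (deriv ρ) θ) * Real.cos θ) • ((FA ∘ wulffW1 ρ) θ)
      = ∫ ξ in (wulffW1 ρ (π/2))..(wulffW1 ρ (3*π/2)), FA ξ :=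
    intervalIntegral.integral_comp_smul_deriv' (fun θ _ => wulffW1_hasDeriv hρ θ)
      ((hρc.add hρ''c).mul Real.continuous_cos).continuousOn himgA'
  have hsubB2 : ∫ θ in (3*π/2)..(5*π/2),
        ((ρ θ + deriv (deriv ρ) θ) * Real.cos θ) • ((FB ∘ wulffW1 ρ) θ)
      = ∫ ξ in (wulffW1 ρ (3*π/2))..(wulffW1 ρ (5*π/2)), FB ξ :=
    intervalIntegral.integral_comp_smul_deriv' (fun θ _ => wulffW1_hasDeriv hρ θ)
      ((hρc.add hρ''c).mul Real.continuous_cos).continuousOn himgB'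
  rw [wulffW1_at_half_pi, wulffW1_at_three_half_pi] at hsubA2
  rw [wulffW1_at_three_half_pi, wulffW1_at_five_half_pi hρ hper] at hsubB2
  have harcA2 : ∫ ξ in (ρ (π/2))..(-ρ (3*π/2)), FA ξ
      = ∫ θ in (π/2)..(3*π/2), ((ρ θ + deriv (deriv ρ) θ) * Real.cos θ) * wulffW2 ρ θ := by
    rw [← hsubA2]
    apply intervalIntegral.integral_congr
    intro θ hθ
    rw [Set.uIcc_of_le (by linarith)] at hθ
    simp only [Function.comp, smul_eq_mul, hFAdef]
    rw [hΘAleft θ hθ]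
  have harcB2 : ∫ ξ in (-ρ (3*π/2))..(ρ (π/2)), FB ξ
      = ∫ θ in (3*π/2)..(5*π/2), ((ρ θ + deriv (deriv ρ) θ) * Real.cos θ) * wulffW2 ρ θ := by
    rw [← hsubB2]
    apply intervalIntegral.integral_congr
    intro θ hθ
    rw [Set.uIcc_of_le (by linarith)] at hθ
    simp only [Function.comp, smul_eq_mul, hFBdef]
    rw [hΘBleft θ hθ]
  -- the total contribution of the comparison curve is -r² |W_ρ|
  have hρ''per : ∀ t, deriv (deriv ρ) (t + 2*π) = deriv (deriv ρ) t :=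
    periodic_of_hasDerivAt (deriv_periodic hρ hper) (rho_deriv_hasDeriv hρ)
  have hW1'W2per : Function.Periodic
      (fun θ => ((ρ θ + deriv (deriv ρ) θ) * Real.cos θ) * wulffW2 ρ θ) (2*π) := by
    intro θ
    simp only
    rw [hper, hρ''per, Real.cos_add_two_pi, wulffW2_periodic hρ hper]
  have hW1'W2c : Continuous (fun θ => ((ρ θ + deriv (deriv ρ) θ) * Real.cos θ) * wulffW2 ρ θ) :=
    ((hρc.add hρ''c).mul Real.continuous_cos).mul (wulffW2_continuous hρ)
  have hsumarc : (∫ θ in (π/2)..(3*π/2), ((ρ θ + deriv (deriv ρ) θ) * Real.cos θ) * wulffW2 ρ θ)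
      + (∫ θ in (3*π/2)..(5*π/2), ((ρ θ + deriv (deriv ρ) θ) * Real.cos θ) * wulffW2 ρ θ)
      = ∫ θ in (π/2)..(5*π/2), ((ρ θ + deriv (deriv ρ) θ) * Real.cos θ) * wulffW2 ρ θ :=
    intervalIntegral.integral_add_adjacent_intervals
      (hW1'W2c.intervalIntegrable _ _) (hW1'W2c.intervalIntegrable _ _)
  have hshift : ∫ θ in (π/2)..(5*π/2), ((ρ θ + deriv (deriv ρ) θ) * Real.cos θ) * wulffW2 ρ θ
      = ∫ θ in (0:ℝ)..(2*π), ((ρ θ + deriv (deriv ρ) θ) * Real.cos θ) * wulffW2 ρ θ := by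
    have hcal := hW1'W2per.intervalIntegral_add_eq (π/2) 0
    rw [zero_add, show (π/2 + 2*π : ℝ) = 5*π/2 by ring] at hcal
    exact hcal
  have hareaS : ∫ θ in (0:ℝ)..(2*π), ((ρ θ + deriv (deriv ρ) θ) * Real.cos θ) * wulffW2 ρ θ
      = - wulffArea ρ := by
    have hwa := wulff_area_eq hρ hper
    have hcomm : ∫ θ in (0:ℝ)..(2*π), ((ρ θ + deriv (deriv ρ) θ) * Real.cos θ) * wulffW2 ρ θ
        = ∫ θ in (0:ℝ)..(2*π), wulffW2 ρ θ * ((ρ θ + deriv (deriv ρ) θ) * Real.cos θ) := by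
      apply intervalIntegral.integral_congr; intro θ _; ring
    rw [hcomm]
    linarith
  -- pointwise Schmidt bound on each arc
  have hbound : ∀ (Θf : ℝ → ℝ),
      (∀ ξ ∈ Set.Icc (-ρ (3*π/2)) (ρ (π/2)), wulffW1 ρ (Θf ξ) = ξ) → ∀ u,
      (x1 u - c) * (g u * Real.sin (ν u))
        - (r * wulffW2 ρ (Θf (hh u))) * (g u * Real.cos (ν u))
        ≤ r * (ρ (ν u) * g u) := by
    intro Θf hΘf u
    have hW1 : wulffW1 ρ (Θf (hh u)) = hh u := hΘf _ (hrange u)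
    have hx1c' : x1 u - c = r * wulffW1 ρ (Θf (hh u)) := by
      rw [hW1]; simp only [hhdef]; field_simp
    have hsupp := wulff_support hρ hper hconv (Θf (hh u)) (ν u)
    have hkey := mul_le_mul_of_nonneg_left hsupp (le_of_lt (mul_pos hr (hg u)))
    rw [hx1c']
    linarith only [hkey]
  -- integrate the bound on both arcs
  have hρνgc : Continuous fun u => ρ (ν u) * g u := (hρc.comp hνc).mul hgc
  have hintA : ∫ u in uM..um, ((x1 u - c) * (g u * Real.sin (ν u))
        - (r * FA (hh u)) * (g u * Real.cos (ν u)))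
      ≤ ∫ u in uM..um, r * (ρ (ν u) * g u) := by
    apply intervalIntegral.integral_mono_on (le_of_lt huMum)
    · exact (((hx1c.sub continuous_const).mul hx2'c).sub
        ((continuous_const.mul hFAhh).mul hx1'c)).intervalIntegrable _ _
    · exact (continuous_const.mul hρνgc).intervalIntegrable _ _
    · intro u _
      exact hbound ΘA (fun ξ hξ => (hΘAmem ξ hξ).2) u
  have hintB : ∫ u in um..(uM+1), ((x1 u - c) * (g u * Real.sin (ν u))
        - (r * FB (hh u)) * (g u * Real.cos (ν u)))
      ≤ ∫ u in um..(uM+1), r * (ρ (ν u) * g u) := by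
    apply intervalIntegral.integral_mono_on (le_of_lt humU)
    · exact (((hx1c.sub continuous_const).mul hx2'c).sub
        ((continuous_const.mul hFBhh).mul hx1'c)).intervalIntegrable _ _
    · exact (continuous_const.mul hρνgc).intervalIntegrable _ _
    · intro u _
      exact hbound ΘB (fun ξ hξ => (hΘBmem ξ hξ).2) u
  -- split the integrals on the arcs
  have hsubint : ∀ a b : ℝ, ∫ u in a..b, ((x1 u - c) * (g u * Real.sin (ν u))
        - (r * FA (hh u)) * (g u * Real.cos (ν u)))
      = (∫ u in a..b, (x1 u - c) * (g u * Real.sin (ν u)))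
        - ∫ u in a..b, (r * FA (hh u)) * (g u * Real.cos (ν u)) := by
    intro a b
    apply intervalIntegral.integral_sub
    · exact ((hx1c.sub continuous_const).mul hx2'c).intervalIntegrable _ _
    · exact ((continuous_const.mul hFAhh).mul hx1'c).intervalIntegrable _ _
  have hsubintB : ∀ a b : ℝ, ∫ u in a..b, ((x1 u - c) * (g u * Real.sin (ν u))
        - (r * FB (hh u)) * (g u * Real.cos (ν u)))
      = (∫ u in a..b, (x1 u - c) * (g u * Real.sin (ν u)))
        - ∫ u in a..b, (r * FB (hh u)) * (g u * Real.cos (ν u)) := by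
    intro a b
    apply intervalIntegral.integral_sub
    · exact ((hx1c.sub continuous_const).mul hx2'c).intervalIntegrable _ _
    · exact ((continuous_const.mul hFBhh).mul hx1'c).intervalIntegrable _ _
  have hadj1 : (∫ u in uM..um, (x1 u - c) * (g u * Real.sin (ν u)))
      + (∫ u in um..(uM+1), (x1 u - c) * (g u * Real.sin (ν u)))
      = ∫ u in uM..(uM+1), (x1 u - c) * (g u * Real.sin (ν u)) :=
    intervalIntegral.integral_add_adjacent_intervals
      (((hx1c.sub continuous_const).mul hx2'c).intervalIntegrable _ _)
      (((hx1c.sub continuous_const).mul hx2'c).intervalIntegrable _ _)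
  have hadj2 : (∫ u in uM..um, r * (ρ (ν u) * g u))
      + (∫ u in um..(uM+1), r * (ρ (ν u) * g u))
      = ∫ u in uM..(uM+1), r * (ρ (ν u) * g u) :=
    intervalIntegral.integral_add_adjacent_intervals
      ((continuous_const.mul hρνgc).intervalIntegrable _ _)
      ((continuous_const.mul hρνgc).intervalIntegrable _ _)
  -- compute the full-period integrals
  have hq1per : Function.Periodic (fun u => (x1 u - c) * (g u * Real.sin (ν u))) 1 := by
    intro u
    simp only
    rw [hx1per u, hgper u, hsinper u]
  have hxpart : ∫ u in uM..(uM+1), (x1 u - c) * (g u * Real.sin (ν u)) = Av := by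
    have hcal := hq1per.intervalIntegral_add_eq uM 0
    rw [zero_add] at hcal
    rw [hcal]
    have hsplit2 : ∫ u in (0:ℝ)..1, (x1 u - c) * (g u * Real.sin (ν u))
        = (∫ u in (0:ℝ)..1, x1 u * (g u * Real.sin (ν u)))
          - c * ∫ u in (0:ℝ)..1, g u * Real.sin (ν u) := by
      rw [← intervalIntegral.integral_const_mul, ← intervalIntegral.integral_sub
        (f := fun u => x1 u * (g u * Real.sin (ν u))) (g := fun u => c * (g u * Real.sin (ν u)))
        ((hx1c.mul hx2'c).intervalIntegrable _ _)
        ((continuous_const.mul hx2'c).intervalIntegrable _ _)]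
      apply intervalIntegral.integral_congr; intro u _; ring
    have h00 := hint_x2' 0
    rw [zero_add] at h00
    rw [hsplit2, h00, hAv_eq]
    ring
  have hq3per : Function.Periodic (fun u => ρ (ν u) * g u) 1 := by
    intro u
    simp only
    rw [hgper u, hνper u, hper (ν u)]
  have hLpart : ∫ u in uM..(uM+1), r * (ρ (ν u) * g u) = r * L := by
    rw [intervalIntegral.integral_const_mul]
    have hcal := hq3per.intervalIntegral_add_eq uM 0
    rw [zero_add] at hcal
    rw [hcal, hLdef]
  -- the Schmidt inequality  Av + r² |W_ρ| ≤ r L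
  have hkey : Av + r^2 * wulffArea ρ ≤ r * L := by
    have hsum2 := add_le_add hintA hintB
    rw [hsubint uM um, hsubintB um (uM+1), harcA, harcB, harcA2, harcB2] at hsum2
    rw [hadj2, hLpart] at hsum2
    have hy : r^2 * (∫ θ in (π/2)..(3*π/2), ((ρ θ + deriv (deriv ρ) θ) * Real.cos θ) * wulffW2 ρ θ)
        + r^2 * (∫ θ in (3*π/2)..(5*π/2), ((ρ θ + deriv (deriv ρ) θ) * Real.cos θ) * wulffW2 ρ θ)
        = - (r^2 * wulffArea ρ) := by
      rw [← mul_add, hsumarc, hshift, hareaS]; ring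
    have hx : (∫ u in uM..um, (x1 u - c) * (g u * Real.sin (ν u)))
        + (∫ u in um..(uM+1), (x1 u - c) * (g u * Real.sin (ν u))) = Av := by
      rw [hadj1, hxpart]
    linarith [hsum2, hy, hx]
  -- positivity of the Wulff area
  have hWpos : 0 < wulffArea ρ := by
    rw [wulffArea_def']
    have hpos2 : 0 < ∫ θ in (0:ℝ)..(2*π), ρ θ * (ρ θ + deriv (deriv ρ) θ) := by
      apply intervalIntegral.intervalIntegral_pos_of_pos_on
      · exact (hρc.mul (hρc.add hρ''c)).intervalIntegrable _ _
      · intro θ _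
        exact mul_pos (hpos θ) (hconv θ)
      · linarith
    linarith
  -- conclude by AM-GM
  -- goal is already in terms of Av and L
  have hAv : 0 < Av := hA
  have h1 : (Av + r^2 * wulffArea ρ)^2 ≤ (r*L)^2 := by
    apply pow_le_pow_left₀ _ hkey
    positivity
  have h2 : 4 * wulffArea ρ * Av * r^2 ≤ (r*L)^2 := by
    linarith only [h1, sq_nonneg (Av - r^2 * wulffArea ρ)]
  have h3 : 4 * wulffArea ρ * Av * r^2 ≤ L^2 * r^2 := by linarith only [h2]
  have h4 := le_of_mul_le_mul_right h3 (by positivity : (0:ℝ) < r^2)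
  linarith

end schmidt
section identities

variable {σ μ : ℝ → ℝ}

lemma parts_symm (hσ : ContDiff ℝ ∞ σ) (hσper : ∀ t, σ (t + 2*π) = σ t)
    (hμ : ContDiff ℝ ∞ μ) (hμper : ∀ t, μ (t + 2*π) = μ t) :
    ∫ t in (0:ℝ)..(2*π), σ t * deriv (deriv μ) t
      = ∫ t in (0:ℝ)..(2*π), μ t * deriv (deriv σ) t := by
  have h1 : ∫ t in (0:ℝ)..(2*π), σ t * deriv (deriv μ) t
      = σ (2*π) * deriv μ (2*π) - σ 0 * deriv μ 0
        - ∫ t in (0:ℝ)..(2*π), deriv σ t * deriv μ t := by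
    apply intervalIntegral.integral_mul_deriv_eq_deriv_mul_of_hasDerivAt
    · exact hσ.continuous.continuousOn
    · exact (rho_deriv_contDiff hμ).continuous.continuousOn
    · intro t _; exact rho_hasDeriv hσ t
    · intro t _; exact rho_deriv_hasDeriv hμ t
    · exact (rho_deriv_contDiff hσ).continuous.intervalIntegrable _ _
    · exact (rho_deriv2_continuous hμ).intervalIntegrable _ _
  have h2 : ∫ t in (0:ℝ)..(2*π), μ t * deriv (deriv σ) t
      = μ (2*π) * deriv σ (2*π) - μ 0 * deriv σ 0
        - ∫ t in (0:ℝ)..(2*π), deriv μ t * deriv σ t := by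
    apply intervalIntegral.integral_mul_deriv_eq_deriv_mul_of_hasDerivAt
    · exact hμ.continuous.continuousOn
    · exact (rho_deriv_contDiff hσ).continuous.continuousOn
    · intro t _; exact rho_hasDeriv hμ t
    · intro t _; exact rho_deriv_hasDeriv hσ t
    · exact (rho_deriv_contDiff hμ).continuous.intervalIntegrable _ _
    · exact (rho_deriv2_continuous hσ).intervalIntegrable _ _
  have e1 : σ (2*π) = σ 0 := by have := hσper 0; simpa using this
  have e2 : μ (2*π) = μ 0 := by have := hμper 0; simpa using this
  have e3 : deriv σ (2*π) = deriv σ 0 := by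
    have := deriv_periodic hσ hσper 0; simpa using this
  have e4 : deriv μ (2*π) = deriv μ 0 := by
    have := deriv_periodic hμ hμper 0; simpa using this
  have hcomm : ∫ t in (0:ℝ)..(2*π), deriv σ t * deriv μ t
      = ∫ t in (0:ℝ)..(2*π), deriv μ t * deriv σ t := by
    apply intervalIntegral.integral_congr; intro t _; ring
  rw [h1, h2, e1, e2, e3, e4, hcomm]
  ring

lemma mixed_symm (hσ : ContDiff ℝ ∞ σ) (hσper : ∀ t, σ (t + 2*π) = σ t)
    (hμ : ContDiff ℝ ∞ μ) (hμper : ∀ t, μ (t + 2*π) = μ t) :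
    mixedWulffEnergy σ μ = mixedWulffEnergy μ σ := by
  rw [mixedWulffEnergy_def', mixedWulffEnergy_def']
  have hs1 : ∫ t in (0:ℝ)..(2*π), σ t * (μ t + deriv (deriv μ) t)
      = (∫ t in (0:ℝ)..(2*π), σ t * μ t) + ∫ t in (0:ℝ)..(2*π), σ t * deriv (deriv μ) t := by
    rw [← intervalIntegral.integral_add
      (f := fun t => σ t * μ t) (g := fun t => σ t * deriv (deriv μ) t)
      ((hσ.continuous.mul hμ.continuous).intervalIntegrable _ _)
      ((hσ.continuous.mul (rho_deriv2_continuous hμ)).intervalIntegrable _ _)]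
    apply intervalIntegral.integral_congr; intro t _; ring
  have hs2 : ∫ t in (0:ℝ)..(2*π), μ t * (σ t + deriv (deriv σ) t)
      = (∫ t in (0:ℝ)..(2*π), μ t * σ t) + ∫ t in (0:ℝ)..(2*π), μ t * deriv (deriv σ) t := by
    rw [← intervalIntegral.integral_add
      (f := fun t => μ t * σ t) (g := fun t => μ t * deriv (deriv σ) t)
      ((hμ.continuous.mul hσ.continuous).intervalIntegrable _ _)
      ((hμ.continuous.mul (rho_deriv2_continuous hσ)).intervalIntegrable _ _)]
    apply intervalIntegral.integral_congr; intro t _; ring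
  have hcomm : ∫ t in (0:ℝ)..(2*π), σ t * μ t = ∫ t in (0:ℝ)..(2*π), μ t * σ t := by
    apply intervalIntegral.integral_congr; intro t _; ring
  rw [hs1, hs2, hcomm, parts_symm hσ hσper hμ hμper]

variable (σ μ) in
/-- The positive combination `λσ + μ`. -/
noncomputable def comboFun (lam : ℝ) : ℝ → ℝ := fun t => lam * σ t + μ t

lemma combo_contDiff (hσ : ContDiff ℝ ∞ σ) (hμ : ContDiff ℝ ∞ μ) (lam : ℝ) :
    ContDiff ℝ ∞ (comboFun σ μ lam) :=
  (contDiff_const.mul hσ).add hμ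

lemma combo_deriv (hσ : ContDiff ℝ ∞ σ) (hμ : ContDiff ℝ ∞ μ) (lam : ℝ) :
    deriv (comboFun σ μ lam) = fun t => lam * deriv σ t + deriv μ t := by
  funext t
  exact (((rho_hasDeriv hσ t).const_mul lam).add (rho_hasDeriv hμ t)).deriv

lemma combo_deriv2 (hσ : ContDiff ℝ ∞ σ) (hμ : ContDiff ℝ ∞ μ) (lam : ℝ) (t : ℝ) :
    deriv (deriv (comboFun σ μ lam)) t
      = lam * deriv (deriv σ) t + deriv (deriv μ) t := by
  rw [combo_deriv hσ hμ]
  exact (((rho_deriv_hasDeriv hσ t).const_mul lam).add (rho_deriv_hasDeriv hμ t)).deriv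

lemma combo_area (hσ : ContDiff ℝ ∞ σ) (hσper : ∀ t, σ (t + 2*π) = σ t)
    (hμ : ContDiff ℝ ∞ μ) (hμper : ∀ t, μ (t + 2*π) = μ t) (lam : ℝ) :
    wulffArea (comboFun σ μ lam)
      = lam^2 * wulffArea σ + lam * mixedWulffEnergy σ μ + wulffArea μ := by
  have hc1 : Continuous fun t => σ t * (σ t + deriv (deriv σ) t) :=
    hσ.continuous.mul (hσ.continuous.add (rho_deriv2_continuous hσ))
  have hc2 : Continuous fun t => σ t * (μ t + deriv (deriv μ) t) :=
    hσ.continuous.mul (hμ.continuous.add (rho_deriv2_continuous hμ))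
  have hc3 : Continuous fun t => μ t * (σ t + deriv (deriv σ) t) :=
    hμ.continuous.mul (hσ.continuous.add (rho_deriv2_continuous hσ))
  have hc4 : Continuous fun t => μ t * (μ t + deriv (deriv μ) t) :=
    hμ.continuous.mul (hμ.continuous.add (rho_deriv2_continuous hμ))
  have hsplit : ∫ t in (0:ℝ)..(2*π),
      comboFun σ μ lam t * (comboFun σ μ lam t + deriv (deriv (comboFun σ μ lam)) t)
      = lam^2 * (∫ t in (0:ℝ)..(2*π), σ t * (σ t + deriv (deriv σ) t))
        + lam * (∫ t in (0:ℝ)..(2*π), σ t * (μ t + deriv (deriv μ) t))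
        + lam * (∫ t in (0:ℝ)..(2*π), μ t * (σ t + deriv (deriv σ) t))
        + ∫ t in (0:ℝ)..(2*π), μ t * (μ t + deriv (deriv μ) t) := by
    rw [← intervalIntegral.integral_const_mul, ← intervalIntegral.integral_const_mul,
      ← intervalIntegral.integral_const_mul]
    rw [← intervalIntegral.integral_add (f := fun t => lam^2 * (σ t * (σ t + deriv (deriv σ) t))) (g := fun t => lam * (σ t * (μ t + deriv (deriv μ) t)))
      ((continuous_const.mul hc1).intervalIntegrable _ _)
      ((continuous_const.mul hc2).intervalIntegrable _ _)]
    rw [← intervalIntegral.integral_add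
      (f := fun t => lam^2 * (σ t * (σ t + deriv (deriv σ) t)) + lam * (σ t * (μ t + deriv (deriv μ) t))) (g := fun t => lam * (μ t * (σ t + deriv (deriv σ) t)))
      (((continuous_const.mul hc1).add (continuous_const.mul hc2)).intervalIntegrable _ _)
      ((continuous_const.mul hc3).intervalIntegrable _ _)]
    rw [← intervalIntegral.integral_add
      (f := fun t => lam^2 * (σ t * (σ t + deriv (deriv σ) t)) + lam * (σ t * (μ t + deriv (deriv μ) t)) + lam * (μ t * (σ t + deriv (deriv σ) t))) (g := fun t => μ t * (μ t + deriv (deriv μ) t))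
      ((((continuous_const.mul hc1).add (continuous_const.mul hc2)).add
        (continuous_const.mul hc3)).intervalIntegrable _ _)
      (hc4.intervalIntegrable _ _)]
    apply intervalIntegral.integral_congr
    intro t _
    simp only [comboFun, combo_deriv2 hσ hμ]
    ring
  have hsymm : ∫ t in (0:ℝ)..(2*π), μ t * (σ t + deriv (deriv σ) t)
      = ∫ t in (0:ℝ)..(2*π), σ t * (μ t + deriv (deriv μ) t) := by
    have h := mixed_symm hσ hσper hμ hμper
    rw [mixedWulffEnergy_def', mixedWulffEnergy_def'] at h
    linarith [h]
  rw [hsymm] at hsplit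
  rw [wulffArea_def', wulffArea_def', wulffArea_def', mixedWulffEnergy_def', hsplit]
  ring

end identities
section minkowski

lemma wulffArea_pos {ρ : ℝ → ℝ} (hρ : ContDiff ℝ ∞ ρ) (hpos : ∀ t, 0 < ρ t)
    (hconv : ∀ t, 0 < ρ t + deriv (deriv ρ) t) : 0 < wulffArea ρ := by
  rw [wulffArea_def']
  have h2 : 0 < ∫ θ in (0:ℝ)..(2*π), ρ θ * (ρ θ + deriv (deriv ρ) θ) := by
    apply intervalIntegral.intervalIntegral_pos_of_pos_on
    · exact (hρ.continuous.mul (hρ.continuous.add (rho_deriv2_continuous hρ))).intervalIntegrable _ _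
    · intro θ _; exact mul_pos (hpos θ) (hconv θ)
    · positivity
  linarith

lemma mixed_pos {σ μ : ℝ → ℝ} (hσ : ContDiff ℝ ∞ σ) (hμ : ContDiff ℝ ∞ μ)
    (hσpos : ∀ t, 0 < σ t) (hμconv : ∀ t, 0 < μ t + deriv (deriv μ) t) :
    0 < mixedWulffEnergy σ μ := by
  rw [mixedWulffEnergy_def']
  apply intervalIntegral.intervalIntegral_pos_of_pos_on
  · exact (hσ.continuous.mul (hμ.continuous.add (rho_deriv2_continuous hμ))).intervalIntegrable _ _
  · intro θ _; exact mul_pos (hσpos θ) (hμconv θ)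
  · positivity

lemma minkowski_first {σ μ : ℝ → ℝ}
    (hσ : ContDiff ℝ ∞ σ) (hσper : ∀ t, σ (t + 2*π) = σ t)
    (hσpos : ∀ t, 0 < σ t) (hσconv : ∀ t, 0 < σ t + deriv (deriv σ) t)
    (hμ : ContDiff ℝ ∞ μ) (hμper : ∀ t, μ (t + 2*π) = μ t)
    (hμpos : ∀ t, 0 < μ t) (hμconv : ∀ t, 0 < μ t + deriv (deriv μ) t) :
    4 * wulffArea σ * wulffArea μ ≤ (mixedWulffEnergy σ μ)^2 := by
  have hπ := Real.pi_pos
  have hμ''c := rho_deriv2_continuous hμ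
  have hGc : Continuous (fun u : ℝ => 2*π*u) := continuous_const.mul continuous_id
  have hG : ∀ u : ℝ, HasDerivAt (fun u : ℝ => 2*π*u) (2*π) u := by
    intro u
    simpa using (hasDerivAt_id u).const_mul (2*π)
  set x1c : ℝ → ℝ := fun u => wulffW1 μ (2*π*u) with hx1cdef
  set x2c : ℝ → ℝ := fun u => wulffW2 μ (2*π*u) with hx2cdef
  set gc : ℝ → ℝ := fun u => 2*π*(μ (2*π*u) + deriv (deriv μ) (2*π*u)) with hgcdef
  set νc : ℝ → ℝ := fun u => 2*π*u with hνcdef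
  have hgcont : Continuous gc :=
    continuous_const.mul ((hμ.continuous.comp hGc).add (hμ''c.comp hGc))
  have hgpos : ∀ u, 0 < gc u := fun u => by
    simp only [hgcdef]
    have := hμconv (2*π*u)
    positivity
  have hx1d : ∀ u, HasDerivAt x1c (gc u * Real.cos (νc u)) u := by
    intro u
    have h1 := (wulffW1_hasDeriv hμ (2*π*u)).comp u (hG u)
    refine h1.congr_deriv ?_
    simp only [hgcdef, hνcdef]
    ring
  have hx2d : ∀ u, HasDerivAt x2c (gc u * Real.sin (νc u)) u := by
    intro u
    have h1 := (wulffW2_hasDeriv hμ (2*π*u)).comp u (hG u)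
    refine h1.congr_deriv ?_
    simp only [hgcdef, hνcdef]
    ring
  have hx1per : ∀ u, x1c (u + 1) = x1c u := by
    intro u
    simp only [hx1cdef]
    rw [show 2*π*(u+1) = 2*π*u + 2*π by ring, wulffW1_periodic hμ hμper]
  have hx2per : ∀ u, x2c (u + 1) = x2c u := by
    intro u
    simp only [hx2cdef]
    rw [show 2*π*(u+1) = 2*π*u + 2*π by ring, wulffW2_periodic hμ hμper]
  have hνper : ∀ u, νc (u + 1) = νc u + 2*π := by
    intro u; simp only [hνcdef]; ring
  -- pointwise form of the area integrand
  have hptw : ∀ u, x1c u * (gc u * Real.sin (νc u)) - x2c u * (gc u * Real.cos (νc u))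
      = gc u * μ (2*π*u) := by
    intro u
    have h := wulff_support_self (ρ := μ) (2*π*u)
    simp only [hx1cdef, hx2cdef, hνcdef]
    linear_combination gc u * h
  have hintc : Continuous fun u => x1c u * (gc u * Real.sin (νc u))
      - x2c u * (gc u * Real.cos (νc u)) := by
    apply Continuous.sub
    · exact ((wulffW1_continuous hμ).comp hGc).mul
        (hgcont.mul (Real.continuous_sin.comp hGc))
    · exact ((wulffW2_continuous hμ).comp hGc).mul
        (hgcont.mul (Real.continuous_cos.comp hGc))
  have hApos : 0 < (1/2) * ∫ u in (0:ℝ)..1,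
      (x1c u * (gc u * Real.sin (νc u)) - x2c u * (gc u * Real.cos (νc u))) := by
    have h2 : 0 < ∫ u in (0:ℝ)..1,
        (x1c u * (gc u * Real.sin (νc u)) - x2c u * (gc u * Real.cos (νc u))) := by
      apply intervalIntegral.intervalIntegral_pos_of_pos_on
      · exact hintc.intervalIntegrable _ _
      · intro u _
        simp only [hptw u]
        exact mul_pos (hgpos u) (hμpos _)
      · norm_num
    linarith
  have key := basic_anisoperimetric σ hσ hσper hσpos hσconv x1c x2c gc νc
    hx1per hx2per hgpos hgcont hx1d hx2d (continuous_const.mul continuous_id)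
    hνper hApos
  -- compute both integrals via the substitution θ = 2πu
  have hsub : ∀ F : ℝ → ℝ, Continuous F →
      ∫ u in (0:ℝ)..1, (2*π) • ((F ∘ fun u : ℝ => 2*π*u) u) = ∫ ξ in (0:ℝ)..(2*π), F ξ := by
    intro F hF
    have h := intervalIntegral.integral_comp_smul_deriv (fun u (_ : u ∈ Set.uIcc (0:ℝ) 1) => hG u)
      continuousOn_const hF
    simpa [hνcdef] using h
  have hLcomp : ∫ u in (0:ℝ)..1, σ (νc u) * gc u = mixedWulffEnergy σ μ := by
    have h1 : ∫ u in (0:ℝ)..1, σ (νc u) * gc u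
        = ∫ u in (0:ℝ)..1, (2*π) • (((fun θ => σ θ * (μ θ + deriv (deriv μ) θ)) ∘ fun u : ℝ => 2*π*u) u) := by
      apply intervalIntegral.integral_congr
      intro u _
      simp only [hνcdef, hgcdef, Function.comp, smul_eq_mul]
      ring
    rw [h1, hsub (fun θ => σ θ * (μ θ + deriv (deriv μ) θ)) (hσ.continuous.mul (hμ.continuous.add hμ''c))]
    rfl
  have hAcomp : ∫ u in (0:ℝ)..1,
      (x1c u * (gc u * Real.sin (νc u)) - x2c u * (gc u * Real.cos (νc u)))
      = 2 * wulffArea μ := by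
    have h1 : ∫ u in (0:ℝ)..1,
        (x1c u * (gc u * Real.sin (νc u)) - x2c u * (gc u * Real.cos (νc u)))
        = ∫ u in (0:ℝ)..1, (2*π) • (((fun θ => μ θ * (μ θ + deriv (deriv μ) θ)) ∘ fun u : ℝ => 2*π*u) u) := by
      apply intervalIntegral.integral_congr
      intro u _
      simp only [hptw u]
      simp only [hgcdef, Function.comp, smul_eq_mul]
      ring
    rw [h1, hsub (fun θ => μ θ * (μ θ + deriv (deriv μ) θ)) (hμ.continuous.mul (hμ.continuous.add hμ''c))]
    rw [wulffArea_def']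
    ring
  rw [hLcomp, hAcomp] at key
  linarith

end minkowski
section algebra

set_option maxHeartbeats 1000000

/-- The algebraic endgame of the mixed anisoperimetric inequality. -/
lemma mixed_algebra {a b Av Wa Wb cE T : ℝ}
    (hAv : 0 < Av) (hWa : 0 < Wa) (hWb : 0 < Wb) (hcE : 0 < cE) (hT : 0 < T)
    (hT2 : T^2 = Wa*Wb) (ha : 0 < a) (hb : 0 < b)
    (hmink : 4*Wa*Wb ≤ cE^2)
    (hα : 0 ≤ a^2 - 4*Av*Wa) (hβ : 0 ≤ b^2 - 4*Av*Wb)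
    (hH : ∀ lam : ℝ, 0 < lam →
      0 ≤ lam^2*(a^2 - 4*Av*Wa) + 2*lam*(a*b - 2*Av*cE) + (b^2 - 4*Av*Wb)) :
    (2*T + cE) * Av ≤ a * b := by
  have hcT : 2*T ≤ cE := by nlinarith [hmink, hT2, hT, hcE]
  have hab4T : 4*Av*T ≤ a*b := by
    have h12 : (4*Av*Wa) * (4*Av*Wb) ≤ a^2 * b^2 := by
      apply mul_le_mul (by linarith) (by linarith) (by positivity) (by positivity)
    have hT2' : 16*Av^2*T^2 = 16*Av^2*(Wa*Wb) := by rw [hT2]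
    have hsq : (4*Av*T)^2 ≤ (a*b)^2 := by nlinarith [h12, hT2']
    nlinarith [hsq, mul_pos ha hb, mul_pos hAv hT]
  rcases le_or_gt 0 (a*b - 2*Av*cE) with hcase | hcase
  · nlinarith [hcase, mul_le_mul_of_nonneg_left hcT (le_of_lt hAv), hAv]
  · have hαpos : 0 < a^2 - 4*Av*Wa := by
      rcases lt_or_eq_of_le hα with h | h
      · exact h
      · exfalso
        have hden : 0 < 2*(2*Av*cE - a*b) := by linarith
        set lam0 : ℝ := (b^2 - 4*Av*Wb + 1)/(2*(2*Av*cE - a*b)) with hlam0def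
        have hlam0 : 0 < lam0 := div_pos (by linarith) hden
        have hq := hH lam0 hlam0
        have hle : 2*lam0*(a*b - 2*Av*cE) = -(b^2 - 4*Av*Wb + 1) := by
          rw [hlam0def, show 2 * ((b^2 - 4*Av*Wb + 1)/(2*(2*Av*cE - a*b))) * (a*b - 2*Av*cE)
            = -((b^2 - 4*Av*Wb + 1) * (2*(2*Av*cE - a*b)) / (2*(2*Av*cE - a*b))) by ring,
            mul_div_cancel_right₀ _ hden.ne']
        nlinarith [hq, hle, h, sq_nonneg lam0]
    have hβpos : 0 < b^2 - 4*Av*Wb := by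
      rcases lt_or_eq_of_le hβ with h | h
      · exact h
      · exfalso
        set lam1 : ℝ := (2*Av*cE - a*b)/(a^2 - 4*Av*Wa) with hlam1def
        have hlam1 : 0 < lam1 := div_pos (by linarith) hαpos
        have hq := hH lam1 hlam1
        have hle : lam1 * (a^2 - 4*Av*Wa) = 2*Av*cE - a*b := by
          rw [hlam1def]
          exact div_mul_cancel₀ _ hαpos.ne'
        nlinarith [hq, hle, hlam1, hcase, h, mul_pos hlam1 hlam1]
    set lam2 : ℝ := Real.sqrt ((b^2 - 4*Av*Wb)/(a^2 - 4*Av*Wa)) with hlam2def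
    have hlam2 : 0 < lam2 := Real.sqrt_pos.mpr (div_pos hβpos hαpos)
    have hlam2sq : lam2^2 = (b^2 - 4*Av*Wb)/(a^2 - 4*Av*Wa) :=
      Real.sq_sqrt (le_of_lt (div_pos hβpos hαpos))
    have hlam2α : lam2^2 * (a^2 - 4*Av*Wa) = b^2 - 4*Av*Wb := by
      rw [hlam2sq]
      field_simp
    have hq := hH lam2 hlam2
    have h5 : (2*Av*cE - a*b) * lam2 ≤ b^2 - 4*Av*Wb := by nlinarith [hq, hlam2α, hlam2]
    have h6 : (2*Av*cE - a*b)^2 * lam2^2 ≤ (b^2 - 4*Av*Wb)^2 := by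
      nlinarith [h5, hlam2, hcase, hβpos,
        mul_pos (by linarith : (0:ℝ) < 2*Av*cE - a*b) hlam2]
    have h6' : (2*Av*cE - a*b)^2 * (b^2 - 4*Av*Wb)
        ≤ ((a^2 - 4*Av*Wa)*(b^2 - 4*Av*Wb)) * (b^2 - 4*Av*Wb) := by
      rw [hlam2sq] at h6
      have h61 := mul_le_mul_of_nonneg_right h6 (le_of_lt hαpos)
      calc (2*Av*cE - a*b)^2 * (b^2 - 4*Av*Wb)
          = ((2*Av*cE - a*b)^2 * ((b^2 - 4*Av*Wb)/(a^2 - 4*Av*Wa))) * (a^2 - 4*Av*Wa) := by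
            rw [mul_assoc _ ((b^2 - 4*Av*Wb)/(a^2 - 4*Av*Wa)), div_mul_cancel₀ _ hαpos.ne']
      _ ≤ (b^2 - 4*Av*Wb)^2 * (a^2 - 4*Av*Wa) := h61
      _ = ((a^2 - 4*Av*Wa)*(b^2 - 4*Av*Wb)) * (b^2 - 4*Av*Wb) := by ring
    have h7 : (2*Av*cE - a*b)^2 ≤ (a^2 - 4*Av*Wa)*(b^2 - 4*Av*Wb) :=
      le_of_mul_le_mul_right h6' hβpos
    have hAMGM : 2*a*b*T ≤ a^2*Wb + b^2*Wa := by
      nlinarith [sq_nonneg (a*T - b*Wa), hT2, hWa]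
    have h8 : (a^2 - 4*Av*Wa)*(b^2 - 4*Av*Wb) ≤ (a*b - 4*Av*T)^2 := by
      have hAMGM' := mul_le_mul_of_nonneg_left hAMGM (by linarith : (0:ℝ) ≤ 4*Av)
      have hT2'' : 16*Av^2*T^2 = 16*Av^2*(Wa*Wb) := by rw [hT2]
      nlinarith [hAMGM', hT2'']
    have h9 : 2*Av*cE - a*b ≤ a*b - 4*Av*T := by
      nlinarith [h7, h8, hab4T, hcase, hAv, hcE]
    linarith [h9, mul_pos hAv hT]

end algebra

set_option maxHeartbeats 1000000 in
/-- Mixed anisoperimetric inequality: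
`L_σ(Γ)·L_μ(Γ) ≥ (2√(|W_σ|·|W_μ|) + L_σ(∂W_μ))·A(Γ)` for any closed curve `Γ`. -/
theorem mixed_anisoperimetric_inequality
    (σ μ : ℝ → ℝ)
    (hσs : ContDiff ℝ (⊤ : ℕ∞) σ) (hσper : ∀ ν, σ (ν + 2 * π) = σ ν)
    (hσpos : ∀ ν, 0 < σ ν) (hσconv : ∀ ν, 0 < σ ν + deriv (deriv σ) ν)
    (hμs : ContDiff ℝ (⊤ : ℕ∞) μ) (hμper : ∀ ν, μ (ν + 2 * π) = μ ν)
    (hμpos : ∀ ν, 0 < μ ν) (hμconv : ∀ ν, 0 < μ ν + deriv (deriv μ) ν)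
    -- a closed curve `x` with speed `g` and tangent-angle lift `ν`
    (x : ℝ → ℝ × ℝ) (g ν : ℝ → ℝ)
    (hx : ContDiff ℝ 2 x)
    (hxper : ∀ u, x (u + 1) = x u)
    (hg : ∀ u, 0 < g u)
    (htang : ∀ u, HasDerivAt x (g u • ((Real.cos (ν u), Real.sin (ν u)) : ℝ × ℝ)) u)
    (hνc : Continuous ν)
    (hνper : ∀ u, ν (u + 1) = ν u + 2 * π)
    (hinj : Set.InjOn x (Set.Ico 0 1))
    -- positive enclosed area
    (hA : 0 < (1 / 2) * ∫ u in (0:ℝ)..1,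
        ((x u).1 * (g u * Real.sin (ν u)) - (x u).2 * (g u * Real.cos (ν u)))) :
    (∫ u in (0:ℝ)..1, σ (ν u) * g u) * (∫ u in (0:ℝ)..1, μ (ν u) * g u) ≥
      (2 * Real.sqrt (wulffArea σ * wulffArea μ) + mixedWulffEnergy σ μ) *
        ((1 / 2) * ∫ u in (0:ℝ)..1,
          ((x u).1 * (g u * Real.sin (ν u)) - (x u).2 * (g u * Real.cos (ν u)))) := by
  have hσ : ContDiff ℝ ∞ σ := hσs.of_le (by simp)
  have hμ : ContDiff ℝ ∞ μ := hμs.of_le (by simp)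
  -- curve component data
  have hx1d : ∀ u, HasDerivAt (fun u => (x u).1) (g u * Real.cos (ν u)) u := by
    intro u
    have h1 := hasDerivAt_fst (htang u)
    simpa using h1
  have hx2d : ∀ u, HasDerivAt (fun u => (x u).2) (g u * Real.sin (ν u)) u := by
    intro u
    have h1 := hasDerivAt_snd (htang u)
    simpa using h1
  have hx1per : ∀ u, (fun u => (x u).1) (u + 1) = (fun u => (x u).1) u :=
    fun u => congrArg Prod.fst (hxper u)
  have hx2per : ∀ u, (fun u => (x u).2) (u + 1) = (fun u => (x u).2) u :=
    fun u => congrArg Prod.snd (hxper u)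
  -- continuity of the speed
  have hdc : Continuous (deriv x) := hx.continuous_deriv (by norm_num)
  have hgeq : ∀ u, Real.cos (ν u) * (deriv x u).1 + Real.sin (ν u) * (deriv x u).2 = g u := by
    intro u
    rw [(htang u).deriv]
    simp only [Prod.smul_fst, Prod.smul_snd, smul_eq_mul]
    linear_combination (g u) * (Real.sin_sq_add_cos_sq (ν u))
  have hgc : Continuous g := by
    have h1 : Continuous fun u => Real.cos (ν u) * (deriv x u).1
        + Real.sin (ν u) * (deriv x u).2 :=
      ((Real.continuous_cos.comp hνc).mul (continuous_fst.comp hdc)).add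
        ((Real.continuous_sin.comp hνc).mul (continuous_snd.comp hdc))
    exact h1.congr hgeq
  -- the three basic anisoperimetric inequalities
  have hbasicσ := basic_anisoperimetric σ hσ hσper hσpos hσconv
    (fun u => (x u).1) (fun u => (x u).2) g ν hx1per hx2per hg hgc hx1d hx2d hνc hνper hA
  have hbasicμ := basic_anisoperimetric μ hμ hμper hμpos hμconv
    (fun u => (x u).1) (fun u => (x u).2) g ν hx1per hx2per hg hgc hx1d hx2d hνc hνper hA
  have hHfam : ∀ lam : ℝ, 0 < lam →
      4 * (lam^2 * wulffArea σ + lam * mixedWulffEnergy σ μ + wulffArea μ)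
          * ((1 / 2) * ∫ u in (0:ℝ)..1,
            ((x u).1 * (g u * Real.sin (ν u)) - (x u).2 * (g u * Real.cos (ν u))))
        ≤ (lam * (∫ u in (0:ℝ)..1, σ (ν u) * g u)
            + ∫ u in (0:ℝ)..1, μ (ν u) * g u)^2 := by
    intro lam hlam
    have hcper : ∀ t, comboFun σ μ lam (t + 2*π) = comboFun σ μ lam t := by
      intro t; simp only [comboFun]; rw [hσper, hμper]
    have hcpos : ∀ t, 0 < comboFun σ μ lam t := by
      intro t
      have := hσpos t; have := hμpos t
      simp only [comboFun]; positivity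
    have hcconv : ∀ t, 0 < comboFun σ μ lam t + deriv (deriv (comboFun σ μ lam)) t := by
      intro t
      rw [combo_deriv2 hσ hμ]
      simp only [comboFun]
      have h3 := mul_pos hlam (hσconv t)
      have h4 := hμconv t
      linarith only [h3, h4]
    have key := basic_anisoperimetric (comboFun σ μ lam) (combo_contDiff hσ hμ lam)
      hcper hcpos hcconv (fun u => (x u).1) (fun u => (x u).2) g ν
      hx1per hx2per hg hgc hx1d hx2d hνc hνper hA
    rw [combo_area hσ hσper hμ hμper] at key
    have hσνg : Continuous fun u => σ (ν u) * g u := (hσ.continuous.comp hνc).mul hgc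
    have hμνg : Continuous fun u => μ (ν u) * g u := (hμ.continuous.comp hνc).mul hgc
    have hLsplit : ∫ u in (0:ℝ)..1, comboFun σ μ lam (ν u) * g u
        = lam * (∫ u in (0:ℝ)..1, σ (ν u) * g u) + ∫ u in (0:ℝ)..1, μ (ν u) * g u := by
      rw [← intervalIntegral.integral_const_mul, ← intervalIntegral.integral_add
        (f := fun u => lam * (σ (ν u) * g u)) (g := fun u => μ (ν u) * g u)
        ((continuous_const.mul hσνg).intervalIntegrable _ _)
        (hμνg.intervalIntegrable _ _)]
      apply intervalIntegral.integral_congr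
      intro u _
      simp only [comboFun]
      ring
    rw [hLsplit] at key
    exact key
  -- abbreviations
  set Av : ℝ := (1 / 2) * ∫ u in (0:ℝ)..1,
      ((x u).1 * (g u * Real.sin (ν u)) - (x u).2 * (g u * Real.cos (ν u))) with hAvdef
  set a : ℝ := ∫ u in (0:ℝ)..1, σ (ν u) * g u with hadef
  set b : ℝ := ∫ u in (0:ℝ)..1, μ (ν u) * g u with hbdef
  set Wa : ℝ := wulffArea σ with hWadef
  set Wb : ℝ := wulffArea μ with hWbdef
  set cE : ℝ := mixedWulffEnergy σ μ with hcEdef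
  set T : ℝ := Real.sqrt (Wa * Wb) with hTdef
  have hAv : 0 < Av := hA
  have hWa : 0 < Wa := wulffArea_pos hσ hσpos hσconv
  have hWb : 0 < Wb := wulffArea_pos hμ hμpos hμconv
  have hcE : 0 < cE := mixed_pos hσ hμ hσpos hμconv
  have hT : 0 < T := Real.sqrt_pos.mpr (by positivity)
  have hT2 : T^2 = Wa * Wb := Real.sq_sqrt (by positivity)
  have ha : 0 < a := by
    apply intervalIntegral.intervalIntegral_pos_of_pos_on
    · exact (Continuous.intervalIntegrable (by exact (hσ.continuous.comp hνc).mul hgc) _ _ :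
        IntervalIntegrable (fun u => σ (ν u) * g u) MeasureTheory.volume 0 1)
    · intro u _; exact mul_pos (hσpos _) (hg u)
    · norm_num
  have hb : 0 < b := by
    apply intervalIntegral.intervalIntegral_pos_of_pos_on
    · exact (Continuous.intervalIntegrable (by exact (hμ.continuous.comp hνc).mul hgc) _ _ :
        IntervalIntegrable (fun u => μ (ν u) * g u) MeasureTheory.volume 0 1)
    · intro u _; exact mul_pos (hμpos _) (hg u)
    · norm_num
  have hmink : 4 * Wa * Wb ≤ cE^2 :=
    minkowski_first hσ hσper hσpos hσconv hμ hμper hμpos hμconv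
  have hα : 0 ≤ a^2 - 4*Av*Wa := by linarith only [hbasicσ]
  have hβ : 0 ≤ b^2 - 4*Av*Wb := by linarith only [hbasicμ]
  have hH : ∀ lam : ℝ, 0 < lam →
      0 ≤ lam^2*(a^2 - 4*Av*Wa) + 2*lam*(a*b - 2*Av*cE) + (b^2 - 4*Av*Wb) := by
    intro lam hlam
    have hfam := hHfam lam hlam
    linarith only [hfam]
  rw [ge_iff_le, show (2 * T + cE) * Av = (2*T + cE) * Av by ring]
  exact mixed_algebra hAv hWa hWb hcE hT hT2 ha hb (by linarith only [hmink]) hα hβ hH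
end wulffbdry
end

section
/- ODE positivity lemma: let t₀ < T, let Δ : [t₀,T) → ℝ satisfy Δ(t) ≥ Δ_min > 0 for all t, let F : [t₀,T) → ℝ satisfy inf_{t₀ ≤ t ≤ t*} F(t) > −∞ for every t* < T, and let K : [t₀,T) → ℝ be differentiable with K(t₀) > 0 and K'(t) ≥ (1/Δ(t))·K(t)²·(K(t) + F(t)) for all t ∈ [t₀,T). Then K(t) > 0 for all t ∈ [t₀,T). -/
/-!
On a compact interval `[t₀, t*]`, wherever `K > 0` the cubic term `K² (K + F) / Δ` is bounded
below by `-C K`, with `C` built from the lower bound of `F`, the maximum of `K` and `Δ_min`.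
A linear inequality `K' ≥ -C K` only allows exponential decay, so `K` cannot reach `0`.
-/

open Real Set

theorem pos_of_neg_mul_le_derivWithin {K K' : ℝ → ℝ} {a b C : ℝ}
    (hK : ContinuousOn K (Icc a b))
    (hK' : ∀ x ∈ Ico a b, HasDerivWithinAt K (K' x) (Ici x) x) (ha : 0 < K a)
    (bound : ∀ x ∈ Ico a b, 0 < K x → -C * K x ≤ K' x) :
    ∀ x ∈ Icc a b, 0 < K x := by
  -- A barrier decaying strictly faster than `exp (-C x)` can never catch up with `K` from below.
  set barrier : ℝ → ℝ := fun x ↦ K a * exp (-(C + 1) * (x - a))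
  have hbarrier : ∀ x, HasDerivAt barrier (-(C + 1) * barrier x) x := fun x ↦ by
    refine ((((hasDerivAt_id' x).sub_const a).const_mul (-(C + 1))).exp.const_mul
      (K a)).congr_deriv ?_
    ring
  have hle : ∀ x ∈ Icc a b, barrier x ≤ K x :=
    image_le_of_deriv_right_lt_deriv_boundary'
      (fun x _ ↦ (hbarrier x).continuousAt.continuousWithinAt)
      (fun x _ ↦ (hbarrier x).hasDerivWithinAt) (by simp [barrier]) hK hK' fun x hx hKx ↦ by
        have hpos : 0 < K x := hKx ▸ by positivity
        rw [hKx]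
        linarith [bound x hx hpos]
  intro x hx
  exact (by positivity : 0 < barrier x).trans_le (hle x hx)

theorem neg_mul_le_cubic {δmin δ k f μ M : ℝ} (hδmin : 0 < δmin) (hδ : δmin ≤ δ) (hμ : 0 ≤ μ)
    (hf : -μ ≤ f) (hk : 0 ≤ k) (hkM : k ≤ M) :
    -(μ * M / δmin) * k ≤ 1 / δ * k ^ 2 * (k + f) := by
  have hδinv : 1 / δ ≤ 1 / δmin := one_div_le_one_div_of_le hδmin hδ
  calc -(μ * M / δmin) * k = 1 / δmin * (k * M) * -μ := by field_simp
    _ ≤ 1 / δmin * k ^ 2 * -μ := by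
        have hk2 : k ^ 2 ≤ k * M := by nlinarith
        exact mul_le_mul_of_nonpos_right (mul_le_mul_of_nonneg_left hk2 (by positivity))
          (neg_nonpos.mpr hμ)
    _ ≤ 1 / δ * k ^ 2 * -μ := mul_le_mul_of_nonpos_right
        (mul_le_mul_of_nonneg_right hδinv (sq_nonneg k)) (neg_nonpos.mpr hμ)
    _ ≤ 1 / δ * k ^ 2 * (k + f) := by
        have hδpos : 0 < δ := hδmin.trans_le hδ
        gcongr
        linarith

theorem ode_positivity_general
    (t₀ : ℝ) (T : EReal)
    (Δmin : ℝ) (hΔmin : 0 < Δmin)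
    (Δ F K K' : ℝ → ℝ)
    (hΔ : ∀ t : ℝ, t₀ ≤ t → (t : EReal) < T → Δmin ≤ Δ t)
    (hF : ∀ tstar : ℝ, t₀ ≤ tstar → (tstar : EReal) < T →
      ∃ m : ℝ, ∀ t ∈ Set.Icc t₀ tstar, m ≤ F t)
    (hK0 : 0 < K t₀)
    (hK : ∀ t : ℝ, t₀ ≤ t → (t : EReal) < T →
      HasDerivWithinAt K (K' t) (Set.Ici t₀) t)
    (hK' : ∀ t : ℝ, t₀ ≤ t → (t : EReal) < T →
      (1 / Δ t) * K t ^ 2 * (K t + F t) ≤ K' t) :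
    ∀ t : ℝ, t₀ ≤ t → (t : EReal) < T → 0 < K t := by
  intro t₁ ht₁ ht₁T
  have hltT : ∀ t ∈ Icc t₀ t₁, (t : EReal) < T := fun t ht ↦
    (EReal.coe_le_coe_iff.mpr ht.2).trans_lt ht₁T
  have hderiv : ∀ t ∈ Icc t₀ t₁, HasDerivWithinAt K (K' t) (Ici t₀) t := fun t ht ↦
    hK t ht.1 (hltT t ht)
  have hcont : ContinuousOn K (Icc t₀ t₁) := fun t ht ↦
    (hderiv t ht).continuousWithinAt.mono Icc_subset_Ici_self
  obtain ⟨m, hm⟩ := hF t₁ ht₁ ht₁T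
  obtain ⟨M, hM⟩ := isCompact_Icc.bddAbove_image hcont
  refine pos_of_neg_mul_le_derivWithin (C := max (-m) 0 * M / Δmin) hcont
    (fun t ht ↦ (hderiv t (Ico_subset_Icc_self ht)).mono (Ici_subset_Ici.mpr ht.1)) hK0
    (fun t ht hKt ↦ ?_) t₁ ⟨ht₁, le_rfl⟩
  have ht : t ∈ Icc t₀ t₁ := Ico_subset_Icc_self ht
  have hFt : -max (-m) 0 ≤ F t := (neg_le.mpr (le_max_left _ _)).trans (hm t ht)
  exact (neg_mul_le_cubic hΔmin (hΔ t ht.1 (hltT t ht)) (le_max_right _ _) hFt hKt.le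
    (hM (mem_image_of_mem K ht))).trans (hK' t ht.1 (hltT t ht))

/-- ODE positivity lemma on `[t₀, T)` (with `T ≤ ∞`, modeled by `T : EReal`):
if `K(t₀) > 0` and `K'(t) ≥ (1/Δ(t))·K(t)²·(K(t) + F(t))` where `Δ ≥ Δ_min > 0` and
`F` is bounded below on every compact subinterval `[t₀, t*]` with `t* < T`,
then `K(t) > 0` on `[t₀, T)`. -/
theorem ode_positivity
    (t₀ : ℝ) (T : EReal) (ht₀T : (t₀ : EReal) < T)
    (Δmin : ℝ) (hΔmin : 0 < Δmin)
    (Δ F K K' : ℝ → ℝ)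
    (hΔ : ∀ t : ℝ, t₀ ≤ t → (t : EReal) < T → Δmin ≤ Δ t)
    (hF : ∀ tstar : ℝ, t₀ ≤ tstar → (tstar : EReal) < T →
      ∃ m : ℝ, ∀ t ∈ Set.Icc t₀ tstar, m ≤ F t)
    (hK0 : 0 < K t₀)
    (hK : ∀ t : ℝ, t₀ ≤ t → (t : EReal) < T →
      HasDerivWithinAt K (K' t) (Set.Ici t₀) t)
    (hK' : ∀ t : ℝ, t₀ ≤ t → (t : EReal) < T →
      (1 / Δ t) * K t ^ 2 * (K t + F t) ≤ K' t) :
    ∀ t : ℝ, t₀ ≤ t → (t : EReal) < T → 0 < K t :=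
  ode_positivity_general t₀ T Δmin hΔmin Δ F K K' hΔ hF hK0 hK hK'
end

section
/- First variation of the anisotropic length: let σ be an anisotropy function and let Φ : ℝ² \ {0} → ℝ be its positively 1-homogeneous extension, Φ(ρ cos θ, ρ sin θ) = ρ·σ(θ) for ρ > 0. Let x : ℝ → ℝ² be a smooth closed curve with continuous tangent-angle lift ν, and let y : ℝ → ℝ² be smooth and 1-periodic. Then (d/dε)|_{ε=0} ∫₀¹ Φ(x'(u) + ε y'(u)) du = −∫₀¹ (σ(ν(u)) + σ''(ν(u)))·ν'(u)·(N(u)·y(u)) du, where N(u) = (−sin ν(u), cos ν(u)); equivalently, L_σ'(Γ(x))y = −∫_Γ k_σ (N·y) ds. -/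
open Real
open scoped ContDiff

lemma fva_polar_rep {σ : ℝ → ℝ} {Φ : ℝ × ℝ → ℝ}
    (hΦ : ∀ ρ : ℝ, 0 < ρ → ∀ θ : ℝ, Φ (ρ * Real.cos θ, ρ * Real.sin θ) = ρ * σ θ)
    (θ₀ : ℝ) (z : ℝ × ℝ)
    (ht : 0 < z.1 * Real.cos θ₀ + z.2 * Real.sin θ₀) :
    Φ z = Real.sqrt ((z.1 * Real.cos θ₀ + z.2 * Real.sin θ₀) ^ 2
        + (-z.1 * Real.sin θ₀ + z.2 * Real.cos θ₀) ^ 2) *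
      σ (θ₀ + Real.arctan ((-z.1 * Real.sin θ₀ + z.2 * Real.cos θ₀)
        / (z.1 * Real.cos θ₀ + z.2 * Real.sin θ₀))) := by
  set t := z.1 * Real.cos θ₀ + z.2 * Real.sin θ₀ with htdef
  set n := -z.1 * Real.sin θ₀ + z.2 * Real.cos θ₀ with hndef
  set r := Real.sqrt (t ^ 2 + n ^ 2) with hrdef
  have hq : 0 < t ^ 2 + n ^ 2 := by positivity
  have hr : 0 < r := Real.sqrt_pos.2 hq
  set φ := Real.arctan (n / t) with hφdef
  have hsq : Real.sqrt (1 + (n / t) ^ 2) = r / t := by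
    rw [show (1 : ℝ) + (n / t) ^ 2 = (t ^ 2 + n ^ 2) / t ^ 2 by field_simp,
      Real.sqrt_div hq.le, Real.sqrt_sq ht.le]
  have hcosφ : Real.cos φ = t / r := by
    rw [hφdef, Real.cos_arctan, hsq]
    field_simp
  have hsinφ : Real.sin φ = n / r := by
    rw [hφdef, Real.sin_arctan, hsq]
    field_simp
  have h1 : r * Real.cos (θ₀ + φ) = z.1 := by
    rw [Real.cos_add, hcosφ, hsinφ]
    have e : r * (Real.cos θ₀ * (t / r) - Real.sin θ₀ * (n / r))
        = Real.cos θ₀ * t - Real.sin θ₀ * n := by field_simp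
    rw [e, htdef, hndef]
    linear_combination z.1 * Real.sin_sq_add_cos_sq θ₀
  have h2 : r * Real.sin (θ₀ + φ) = z.2 := by
    rw [Real.sin_add, hcosφ, hsinφ]
    have e : r * (Real.sin θ₀ * (t / r) + Real.cos θ₀ * (n / r))
        = Real.sin θ₀ * t + Real.cos θ₀ * n := by field_simp
    rw [e, htdef, hndef]
    linear_combination z.2 * Real.sin_sq_add_cos_sq θ₀
  have := hΦ r hr (θ₀ + φ)
  rw [h1, h2] at this
  simpa using this

lemma fva_hasDerivAt {σ : ℝ → ℝ} (hσ : Differentiable ℝ σ) (θ₀ gg a b e : ℝ)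
    (ht : 0 < gg + e * a) :
    HasDerivAt (fun e : ℝ => Real.sqrt ((gg + e * a) ^ 2 + (e * b) ^ 2) *
        σ (θ₀ + Real.arctan ((e * b) / (gg + e * a))))
      (((gg + e * a) * a + (e * b) * b) / Real.sqrt ((gg + e * a) ^ 2 + (e * b) ^ 2) *
          σ (θ₀ + Real.arctan ((e * b) / (gg + e * a)))
        + Real.sqrt ((gg + e * a) ^ 2 + (e * b) ^ 2) *
          ((b * (gg + e * a) - (e * b) * a) / ((gg + e * a) ^ 2 + (e * b) ^ 2)) *
          deriv σ (θ₀ + Real.arctan ((e * b) / (gg + e * a)))) e := by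
  have hq : 0 < (gg + e * a) ^ 2 + (e * b) ^ 2 := by positivity
  have hr : 0 < Real.sqrt ((gg + e * a) ^ 2 + (e * b) ^ 2) := Real.sqrt_pos.2 hq
  have ht' : HasDerivAt (fun e : ℝ => gg + e * a) a e := by
    simpa using (hasDerivAt_mul_const a).const_add gg
  have hn' : HasDerivAt (fun e : ℝ => e * b) b e := hasDerivAt_mul_const b
  have hq' : HasDerivAt (fun e : ℝ => (gg + e * a) ^ 2 + (e * b) ^ 2)
      (2 * (gg + e * a) * a + 2 * (e * b) * b) e := by
    have h1 := ht'.fun_pow 2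
    have h2 := hn'.fun_pow 2
    have h3 : HasDerivAt (fun e : ℝ => (gg + e * a) ^ 2 + (e * b) ^ 2) _ e := h1.add h2
    simpa [mul_comm, mul_assoc, mul_left_comm] using h3
  have hr' := hq'.sqrt hq.ne'
  have hdiv : HasDerivAt (fun e : ℝ => (e * b) / (gg + e * a))
      ((b * (gg + e * a) - (e * b) * a) / (gg + e * a) ^ 2) e := hn'.div ht' ht.ne'
  have harc := hdiv.arctan
  have hθ := harc.const_add θ₀
  have hσθ : HasDerivAt (fun e : ℝ => σ (θ₀ + Real.arctan ((e * b) / (gg + e * a))))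
      (deriv σ (θ₀ + Real.arctan ((e * b) / (gg + e * a))) *
        (1 / (1 + ((e * b) / (gg + e * a)) ^ 2) *
          ((b * (gg + e * a) - (e * b) * a) / (gg + e * a) ^ 2))) e :=
    ((hσ _).hasDerivAt).comp e hθ
  have key := hr'.mul hσθ
  refine key.congr_deriv ?_
  have hone : 1 + ((e * b) / (gg + e * a)) ^ 2
      = ((gg + e * a) ^ 2 + (e * b) ^ 2) / (gg + e * a) ^ 2 := by field_simp
  rw [hone]
  field_simp

/-- bound on a continuous `2π`-periodic function -/
lemma fva_bdd {s : ℝ → ℝ} (hc : Continuous s) (hp : Function.Periodic s (2 * π)) :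
    ∃ C, ∀ θ, s θ ≤ C := by
  have himg : s '' Set.Icc 0 (0 + 2 * π) = Set.range s :=
    hp.image_Icc (by positivity) 0
  obtain ⟨C, hC⟩ := (isCompact_Icc.image hc).bddAbove
  refine ⟨C, fun θ => hC ?_⟩
  rw [himg]
  exact ⟨θ, rfl⟩

/-- transfer a pointwise property from `[0,1]` to all of `ℝ` by `1`-periodicity -/
lemma fva_per_ext {f : ℝ → ℝ} (hp : ∀ u, f (u + 1) = f u) {P : ℝ → Prop}
    (h : ∀ v ∈ Set.Icc (0 : ℝ) 1, P (f v)) (u : ℝ) : P (f u) := by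
  have hper : Function.Periodic f 1 := hp
  have key : f u = f (Int.fract u) := by
    have := hper.sub_int_mul_eq (x := u) ⌊u⌋
    rw [mul_one] at this
    rw [Int.fract]
    exact this.symm
  rw [key]
  exact h _ ⟨Int.fract_nonneg u, (Int.fract_lt_one u).le⟩

lemma fva_bound_aux {t n a b S D C M : ℝ} (htpos : 0 < t)
    (hSD : |S| + |D| ≤ C) (ha : |a| ≤ M) (hb : |b| ≤ M) :
    |(t * a + n * b) / Real.sqrt (t ^ 2 + n ^ 2) * S
      + Real.sqrt (t ^ 2 + n ^ 2) * ((b * t - n * a) / (t ^ 2 + n ^ 2)) * D|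
      ≤ 2 * M * C := by
  have hq : 0 < t ^ 2 + n ^ 2 := by positivity
  set r := Real.sqrt (t ^ 2 + n ^ 2) with hrdef
  have hr : 0 < r := Real.sqrt_pos.2 hq
  have hr2 : r ^ 2 = t ^ 2 + n ^ 2 := Real.sq_sqrt hq.le
  have htr : |t| ≤ r := by
    rw [← Real.sqrt_sq_eq_abs]
    exact Real.sqrt_le_sqrt (by nlinarith)
  have hnr : |n| ≤ r := by
    rw [← Real.sqrt_sq_eq_abs]
    exact Real.sqrt_le_sqrt (by nlinarith)
  have hM : 0 ≤ M := le_trans (abs_nonneg a) ha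
  have h1 : |(t * a + n * b) / r| ≤ 2 * M := by
    rw [abs_div, abs_of_pos hr, div_le_iff₀ hr]
    have e1 : |t * a + n * b| ≤ |t| * |a| + |n| * |b| := by
      calc |t * a + n * b| ≤ |t * a| + |n * b| := abs_add_le _ _
        _ = |t| * |a| + |n| * |b| := by rw [abs_mul, abs_mul]
    have e2 : |t| * |a| ≤ r * M := mul_le_mul htr ha (abs_nonneg a) hr.le
    have e3 : |n| * |b| ≤ r * M := mul_le_mul hnr hb (abs_nonneg b) hr.le
    nlinarith
  have h2 : |r * ((b * t - n * a) / (t ^ 2 + n ^ 2))| ≤ 2 * M := by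
    rw [abs_mul, abs_div, abs_of_pos hr, abs_of_pos hq, mul_div_assoc', div_le_iff₀ hq]
    have e1 : |b * t - n * a| ≤ |b| * |t| + |n| * |a| := by
      calc |b * t - n * a| ≤ |b * t| + |n * a| := abs_sub _ _
        _ = |b| * |t| + |n| * |a| := by rw [abs_mul, abs_mul]
    have e2 : |b| * |t| ≤ M * r := mul_le_mul hb htr (abs_nonneg t) hM
    have e3 : |n| * |a| ≤ r * M := mul_le_mul hnr ha (abs_nonneg a) hr.le
    nlinarith [hr2, hr.le, abs_nonneg (b * t - n * a)]
  have hS : |S| ≤ C := by have := abs_nonneg D; linarith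
  have hD : |D| ≤ C := by have := abs_nonneg S; linarith
  have hC : 0 ≤ C := le_trans (abs_nonneg S) hS
  calc |(t * a + n * b) / r * S + r * ((b * t - n * a) / (t ^ 2 + n ^ 2)) * D|
      ≤ |(t * a + n * b) / r * S| + |r * ((b * t - n * a) / (t ^ 2 + n ^ 2)) * D| :=
        abs_add_le _ _
    _ = |(t * a + n * b) / r| * |S| + |r * ((b * t - n * a) / (t ^ 2 + n ^ 2))| * |D| := by
        rw [abs_mul, abs_mul]
    _ ≤ 2 * M * |S| + 2 * M * |D| := by gcongr
    _ = 2 * M * (|S| + |D|) := by ring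
    _ ≤ 2 * M * C := by nlinarith

/-- First variation of the anisotropic length: if `Φ` is the positively 1-homogeneous
extension of the anisotropy `σ` (i.e. `Φ(ρ cos θ, ρ sin θ) = ρ·σ(θ)` for `ρ > 0`),
`x` is a smooth closed curve with tangent-angle lift `ν`, and `y` is a smooth
1-periodic variation, then
`(d/dε)|₀ ∫₀¹ Φ(x' + ε y') du = −∫₀¹ (σ(ν)+σ''(ν))·ν'·(N·y) du`, i.e.
`L_σ'(Γ(x))y = −∫_Γ k_σ (N·y) ds`. -/
theorem first_variation_anisotropic_length
    (σ : ℝ → ℝ)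
    (hσs : ContDiff ℝ (⊤ : ℕ∞) σ) (hσper : ∀ ν, σ (ν + 2 * π) = σ ν)
    (hσpos : ∀ ν, 0 < σ ν) (hσconv : ∀ ν, 0 < σ ν + deriv (deriv σ) ν)
    (Φ : ℝ × ℝ → ℝ)
    (hΦ : ∀ ρ : ℝ, 0 < ρ → ∀ θ : ℝ, Φ (ρ * Real.cos θ, ρ * Real.sin θ) = ρ * σ θ)
    -- a smooth closed curve `x` with speed `g` and smooth tangent-angle lift `ν`
    (x : ℝ → ℝ × ℝ) (g ν : ℝ → ℝ)
    (hx : ContDiff ℝ (⊤ : ℕ∞) x)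
    (hxper : ∀ u, x (u + 1) = x u)
    (hg : ∀ u, 0 < g u)
    (htang : ∀ u, HasDerivAt x (g u • ((Real.cos (ν u), Real.sin (ν u)) : ℝ × ℝ)) u)
    (hν : ContDiff ℝ (⊤ : ℕ∞) ν)
    (hνper : ∀ u, ν (u + 1) = ν u + 2 * π)
    -- a smooth 1-periodic variation `y`
    (y : ℝ → ℝ × ℝ) (hy : ContDiff ℝ (⊤ : ℕ∞) y) (hyper : ∀ u, y (u + 1) = y u) :
    HasDerivAt (fun ε : ℝ => ∫ u in (0:ℝ)..1, Φ (deriv x u + ε • deriv y u))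
      (-∫ u in (0:ℝ)..1, (σ (ν u) + deriv (deriv σ) (ν u)) * deriv ν u *
        ((-Real.sin (ν u)) * (y u).1 + Real.cos (ν u) * (y u).2)) 0 := by
  have hνd : Differentiable ℝ ν := hν.differentiable (by simp)
  have hyd : Differentiable ℝ y := hy.differentiable (by simp)
  have hσd : Differentiable ℝ σ := hσs.differentiable (by simp)
  have hσi : ContDiff ℝ ∞ σ := hσs.of_le (by simp)
  have hσ' : ContDiff ℝ ∞ (deriv σ) := (contDiff_infty_iff_deriv.mp hσi).2
  have hσ'' : ContDiff ℝ ∞ (deriv (deriv σ)) := (contDiff_infty_iff_deriv.mp hσ').2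
  have hσ'per : ∀ t, deriv σ (t + 2 * π) = deriv σ t := by
    intro t
    have h := deriv_comp_add_const σ (2 * π) t
    rw [funext hσper] at h
    exact h.symm
  set a : ℝ → ℝ := fun u => (deriv y u).1 * Real.cos (ν u) + (deriv y u).2 * Real.sin (ν u)
    with hadef
  set b : ℝ → ℝ := fun u => -(deriv y u).1 * Real.sin (ν u) + (deriv y u).2 * Real.cos (ν u)
    with hbdef
  have hdx : ∀ u, deriv x u = g u • ((Real.cos (ν u), Real.sin (ν u)) : ℝ × ℝ) :=
    fun u => (htang u).deriv
  have hcomp1 : ∀ e u : ℝ,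
      (deriv x u + e • deriv y u).1 * Real.cos (ν u)
        + (deriv x u + e • deriv y u).2 * Real.sin (ν u) = g u + e * a u := by
    intro e u
    rw [hdx u]
    simp only [hadef, Prod.fst_add, Prod.snd_add, Prod.smul_fst, Prod.smul_snd, smul_eq_mul]
    linear_combination g u * Real.sin_sq_add_cos_sq (ν u)
  have hcomp2 : ∀ e u : ℝ,
      -(deriv x u + e • deriv y u).1 * Real.sin (ν u)
        + (deriv x u + e • deriv y u).2 * Real.cos (ν u) = e * b u := by
    intro e u
    rw [hdx u]
    simp only [hbdef, Prod.fst_add, Prod.snd_add, Prod.smul_fst, Prod.smul_snd, smul_eq_mul]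
    ring
  have hrep : ∀ e u : ℝ, 0 < g u + e * a u →
      Φ (deriv x u + e • deriv y u)
        = Real.sqrt ((g u + e * a u) ^ 2 + (e * b u) ^ 2) *
          σ (ν u + Real.arctan ((e * b u) / (g u + e * a u))) := by
    intro e u hpos
    have h := fva_polar_rep hΦ (ν u) (deriv x u + e • deriv y u)
      (by rw [hcomp1]; exact hpos)
    rw [hcomp1, hcomp2] at h
    exact h
  -- continuity
  have hdxc : Continuous (deriv x) := hx.continuous_deriv (by simp)
  have hdyc : Continuous (deriv y) := hy.continuous_deriv (by simp)
  have hνc : Continuous ν := hν.continuous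
  have hac : Continuous a := by
    rw [hadef]
    exact ((continuous_fst.comp hdyc).mul (Real.continuous_cos.comp hνc)).add
      ((continuous_snd.comp hdyc).mul (Real.continuous_sin.comp hνc))
  have hbc : Continuous b := by
    rw [hbdef]
    exact (((continuous_fst.comp hdyc).neg).mul (Real.continuous_sin.comp hνc)).add
      ((continuous_snd.comp hdyc).mul (Real.continuous_cos.comp hνc))
  have hgid : ∀ u, g u = (deriv x u).1 * Real.cos (ν u) + (deriv x u).2 * Real.sin (ν u) := by
    intro u
    rw [hdx u]
    simp only [Prod.smul_fst, Prod.smul_snd, smul_eq_mul]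
    linear_combination (-(g u)) * Real.sin_sq_add_cos_sq (ν u)
  have hgc : Continuous g := by
    have h : g = fun u => (deriv x u).1 * Real.cos (ν u) + (deriv x u).2 * Real.sin (ν u) :=
      funext hgid
    rw [h]
    exact ((continuous_fst.comp hdxc).mul (Real.continuous_cos.comp hνc)).add
      ((continuous_snd.comp hdxc).mul (Real.continuous_sin.comp hνc))
  -- periodicity
  have hdyper : ∀ u, deriv y (u + 1) = deriv y u := by
    intro u
    have h := deriv_comp_add_const y 1 u
    rw [funext hyper] at h
    exact h.symm
  have hdxper : ∀ u, deriv x (u + 1) = deriv x u := by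
    intro u
    have h := deriv_comp_add_const x 1 u
    rw [funext hxper] at h
    exact h.symm
  have hcosper : ∀ u, Real.cos (ν (u + 1)) = Real.cos (ν u) := by
    intro u; rw [hνper u, Real.cos_add_two_pi]
  have hsinper : ∀ u, Real.sin (ν (u + 1)) = Real.sin (ν u) := by
    intro u; rw [hνper u, Real.sin_add_two_pi]
  have haper : ∀ u, a (u + 1) = a u := by
    intro u; rw [hadef]; simp only [hdyper u, hcosper u, hsinper u]
  have hbper : ∀ u, b (u + 1) = b u := by
    intro u; rw [hbdef]; simp only [hdyper u, hcosper u, hsinper u]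
  have hgper : ∀ u, g (u + 1) = g u := by
    intro u; rw [hgid (u + 1), hgid u, hdxper u, hcosper u, hsinper u]
  -- lower bound for g
  obtain ⟨u₀, hu₀mem, hu₀⟩ := isCompact_Icc.exists_isMinOn (Set.nonempty_Icc.2 zero_le_one)
    (hgc.continuousOn : ContinuousOn g (Set.Icc (0:ℝ) 1))
  set δ := g u₀ with hδdef
  have hδpos : 0 < δ := hg u₀
  have hδ : ∀ u, δ ≤ g u :=
    fva_per_ext (f := g) (P := fun t => δ ≤ t) hgper (fun v hv => isMinOn_iff.mp hu₀ v hv)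
  -- upper bound for |a| + |b|
  obtain ⟨v₀, hv₀mem, hv₀⟩ := isCompact_Icc.exists_isMaxOn (Set.nonempty_Icc.2 zero_le_one)
    ((hac.abs.add hbc.abs).continuousOn : ContinuousOn (fun u => |a u| + |b u|) (Set.Icc (0:ℝ) 1))
  set M := |a v₀| + |b v₀| with hMdef
  have hM : ∀ u, |a u| + |b u| ≤ M := by
    have hper : ∀ u, (fun u => |a u| + |b u|) (u + 1) = (fun u => |a u| + |b u|) u := by
      intro u; simp only [haper u, hbper u]
    exact fva_per_ext (f := fun u => |a u| + |b u|) (P := fun t => t ≤ M) hper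
      (fun v hv => isMaxOn_iff.mp hv₀ v hv)
  have hM0 : 0 ≤ M := le_trans (by positivity) (hM 0)
  have hMa : ∀ u, |a u| ≤ M := fun u => le_trans (le_add_of_nonneg_right (abs_nonneg _)) (hM u)
  have hMb : ∀ u, |b u| ≤ M := fun u => le_trans (le_add_of_nonneg_left (abs_nonneg _)) (hM u)
  set ε₀ := δ / (2 * (M + 1)) with hε₀def
  have hε₀pos : 0 < ε₀ := by positivity
  have htpos : ∀ e : ℝ, |e| < ε₀ → ∀ u, 0 < g u + e * a u := by
    intro e he u
    have h1 : |e * a u| ≤ ε₀ * M := by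
      rw [abs_mul]
      exact mul_le_mul he.le (hMa u) (abs_nonneg _) hε₀pos.le
    have h2 : ε₀ * M < δ := by
      rw [hε₀def, div_mul_eq_mul_div, div_lt_iff₀ (by positivity)]
      nlinarith
    have h3 := neg_abs_le (e * a u)
    have h4 := hδ u
    linarith
  -- global bound for |σ| + |σ'|
  obtain ⟨C, hC⟩ : ∃ C, ∀ θ, |σ θ| + |deriv σ θ| ≤ C := by
    apply fva_bdd (hσs.continuous.abs.add hσ'.continuous.abs)
    intro t
    show |σ (t + 2 * π)| + |deriv σ (t + 2 * π)| = _
    rw [hσper, hσ'per]; rfl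
  -- the pointwise derivative
  set F' : ℝ → ℝ → ℝ := fun e u =>
    ((g u + e * a u) * a u + e * b u * b u) / Real.sqrt ((g u + e * a u) ^ 2 + (e * b u) ^ 2) *
        σ (ν u + Real.arctan (e * b u / (g u + e * a u)))
      + Real.sqrt ((g u + e * a u) ^ 2 + (e * b u) ^ 2) *
        ((b u * (g u + e * a u) - e * b u * a u) / ((g u + e * a u) ^ 2 + (e * b u) ^ 2)) *
        deriv σ (ν u + Real.arctan (e * b u / (g u + e * a u))) with hF'def
  have hFcont : ∀ e : ℝ, |e| < ε₀ → Continuous fun u => Φ (deriv x u + e • deriv y u) := by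
    intro e he
    have heq : (fun u => Φ (deriv x u + e • deriv y u))
        = fun u => Real.sqrt ((g u + e * a u) ^ 2 + (e * b u) ^ 2) *
            σ (ν u + Real.arctan (e * b u / (g u + e * a u))) :=
      funext fun u => hrep e u (htpos e he u)
    rw [heq]
    have hden : ∀ u, g u + e * a u ≠ 0 := fun u => (htpos e he u).ne'
    have htc : Continuous fun u => g u + e * a u := hgc.add (continuous_const.mul hac)
    have hnc : Continuous fun u => e * b u := continuous_const.mul hbc
    exact (Real.continuous_sqrt.comp ((htc.pow 2).add (hnc.pow 2))).mul
      (hσs.continuous.comp (hνc.add (Real.continuous_arctan.comp (hnc.div htc hden))))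
  have hF'cont : ∀ e : ℝ, |e| < ε₀ → Continuous (F' e) := by
    intro e he
    have hden : ∀ u, g u + e * a u ≠ 0 := fun u => (htpos e he u).ne'
    have hqpos : ∀ u, 0 < (g u + e * a u) ^ 2 + (e * b u) ^ 2 := fun u =>
      add_pos_of_pos_of_nonneg (pow_pos (htpos e he u) 2) (sq_nonneg _)
    have hrne : ∀ u, Real.sqrt ((g u + e * a u) ^ 2 + (e * b u) ^ 2) ≠ 0 := fun u =>
      (Real.sqrt_pos.2 (hqpos u)).ne'
    have htc : Continuous fun u => g u + e * a u := hgc.add (continuous_const.mul hac)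
    have hnc : Continuous fun u => e * b u := continuous_const.mul hbc
    have hqc : Continuous fun u => (g u + e * a u) ^ 2 + (e * b u) ^ 2 :=
      (htc.pow 2).add (hnc.pow 2)
    have hrc : Continuous fun u => Real.sqrt ((g u + e * a u) ^ 2 + (e * b u) ^ 2) :=
      Real.continuous_sqrt.comp hqc
    have hθc : Continuous fun u => ν u + Real.arctan (e * b u / (g u + e * a u)) :=
      hνc.add (Real.continuous_arctan.comp (hnc.div htc hden))
    rw [hF'def]
    exact ((((htc.mul hac).add (hnc.mul hbc)).div hrc hrne).mul
        (hσs.continuous.comp hθc)).add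
      ((hrc.mul (((hbc.mul htc).sub (hnc.mul hac)).div hqc fun u => (hqpos u).ne')).mul
        (hσ'.continuous.comp hθc))
  have habs : ∀ e : ℝ, e ∈ Metric.ball (0:ℝ) ε₀ → |e| < ε₀ := by
    intro e he
    simpa [Real.dist_eq] using he
  have main := intervalIntegral.hasDerivAt_integral_of_dominated_loc_of_deriv_le
    (𝕜 := ℝ) (μ := MeasureTheory.volume) (a := (0:ℝ)) (b := 1) (s := Metric.ball (0:ℝ) ε₀)
    (F := fun e u => Φ (deriv x u + e • deriv y u)) (F' := F') (x₀ := (0:ℝ))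
    (bound := fun _ => 2 * M * C) (Metric.ball_mem_nhds (0:ℝ) hε₀pos)
    ?_ ?_ ?_ ?_ ?_ ?_
  · -- conclude from `main`
    have hF'0 : ∀ u, F' 0 u = σ (ν u) * a u + deriv σ (ν u) * b u := by
      intro u
      have hgu := hg u
      rw [hF'def]
      simp only [zero_mul, add_zero, mul_zero, zero_add]
      rw [zero_div, Real.arctan_zero, add_zero, show (0:ℝ) ^ 2 = 0 by norm_num, add_zero,
        Real.sqrt_sq hgu.le]
      field_simp
      ring
    set I2 : ℝ → ℝ := fun u => (σ (ν u) + deriv (deriv σ) (ν u)) * deriv ν u *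
      ((-Real.sin (ν u)) * (y u).1 + Real.cos (ν u) * (y u).2) with hI2def
    set V : ℝ → ℝ := fun u =>
      σ (ν u) * ((y u).1 * Real.cos (ν u) + (y u).2 * Real.sin (ν u))
        + deriv σ (ν u) * (-(y u).1 * Real.sin (ν u) + (y u).2 * Real.cos (ν u)) with hVdef
    have hVW : ∀ u, HasDerivAt V (σ (ν u) * a u + deriv σ (ν u) * b u + I2 u) u := by
      intro u
      have hνu : HasDerivAt ν (deriv ν u) u := (hνd u).hasDerivAt
      have hyu : HasDerivAt y (deriv y u) u := (hyd u).hasDerivAt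
      have hy1 : HasDerivAt (fun u => (y u).1) (deriv y u).1 u :=
        (ContinuousLinearMap.fst ℝ ℝ ℝ).hasFDerivAt.comp_hasDerivAt u hyu
      have hy2 : HasDerivAt (fun u => (y u).2) (deriv y u).2 u :=
        (ContinuousLinearMap.snd ℝ ℝ ℝ).hasFDerivAt.comp_hasDerivAt u hyu
      have hcosu : HasDerivAt (fun u => Real.cos (ν u)) (-Real.sin (ν u) * deriv ν u) u :=
        hνu.cos
      have hsinu : HasDerivAt (fun u => Real.sin (ν u)) (Real.cos (ν u) * deriv ν u) u :=
        hνu.sin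
      have hσu : HasDerivAt (fun u => σ (ν u)) (deriv σ (ν u) * deriv ν u) u :=
        ((hσd _).hasDerivAt).comp u hνu
      have hσ'u : HasDerivAt (fun u => deriv σ (ν u)) (deriv (deriv σ) (ν u) * deriv ν u) u :=
        (((contDiff_infty_iff_deriv.mp hσ').1 _).hasDerivAt).comp u hνu
      have key := (hσu.mul ((hy1.mul hcosu).add (hy2.mul hsinu))).add
        (hσ'u.mul ((hy1.neg.mul hsinu).add (hy2.mul hcosu)))
      rw [hVdef]
      refine key.congr_deriv ?_
      simp only [Pi.add_apply, Pi.mul_apply, Pi.neg_apply]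
      rw [hadef, hbdef, hI2def]
      ring
    have hνdc : Continuous (deriv ν) := hν.continuous_deriv (by simp)
    have hI1c : Continuous fun u => σ (ν u) * a u + deriv σ (ν u) * b u :=
      ((hσs.continuous.comp hνc).mul hac).add ((hσ'.continuous.comp hνc).mul hbc)
    have hI2c : Continuous I2 := by
      rw [hI2def]
      exact (((hσs.continuous.comp hνc).add (hσ''.continuous.comp hνc)).mul hνdc).mul
        ((((Real.continuous_sin.comp hνc).neg).mul (continuous_fst.comp hy.continuous)).add
          ((Real.continuous_cos.comp hνc).mul (continuous_snd.comp hy.continuous)))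
    have hWint : (∫ u in (0:ℝ)..1, (σ (ν u) * a u + deriv σ (ν u) * b u + I2 u)) = V 1 - V 0 :=
      intervalIntegral.integral_eq_sub_of_hasDerivAt (fun u _ => hVW u)
        ((hI1c.add hI2c).intervalIntegrable 0 1)
    have hV10 : V 1 = V 0 := by
      have h1 : ν 1 = ν 0 + 2 * π := by simpa using hνper 0
      have h2 : y 1 = y 0 := by simpa using hyper 0
      rw [hVdef]
      simp only [h1, h2, hσper, hσ'per, Real.cos_add_two_pi, Real.sin_add_two_pi]
    have hsplit := intervalIntegral.integral_add (μ := MeasureTheory.volume)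
      (a := (0:ℝ)) (b := 1) (hI1c.intervalIntegrable 0 1) (hI2c.intervalIntegrable 0 1)
    have hI1val : (∫ u in (0:ℝ)..1, (σ (ν u) * a u + deriv σ (ν u) * b u))
        = -∫ u in (0:ℝ)..1, I2 u := by
      have h0 : (∫ u in (0:ℝ)..1, (σ (ν u) * a u + deriv σ (ν u) * b u + I2 u)) = 0 := by
        rw [hWint, hV10, sub_self]
      rw [hsplit] at h0
      linarith
    have hfinal : (∫ u in (0:ℝ)..1, F' 0 u) = -∫ u in (0:ℝ)..1, I2 u := by
      rw [intervalIntegral.integral_congr (g := fun u => σ (ν u) * a u + deriv σ (ν u) * b u)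
        (fun u _ => hF'0 u)]
      exact hI1val
    have hmain := main.2
    rw [hfinal] at hmain
    exact hmain
  · -- measurability of F e
    filter_upwards [Metric.ball_mem_nhds (0:ℝ) hε₀pos] with e he
    exact (hFcont e (habs e he)).aestronglyMeasurable
  · -- integrability of F 0
    exact (hFcont 0 (by simpa using hε₀pos)).intervalIntegrable 0 1
  · -- measurability of F' 0
    exact (hF'cont 0 (by simpa using hε₀pos)).aestronglyMeasurable
  · -- bound
    apply Filter.Eventually.of_forall
    intro u _ e he
    rw [Real.norm_eq_abs, hF'def]
    exact fva_bound_aux (htpos e (habs e he) u) (hC _) (hMa u) (hMb u)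
  · -- integrability of bound
    exact intervalIntegrable_const
  · -- differentiability
    apply Filter.Eventually.of_forall
    intro u _ e he
    have hd := fva_hasDerivAt hσd (ν u) (g u) (a u) (b u) e (htpos e (habs e he) u)
    rw [hF'def]
    apply hd.congr_of_eventuallyEq
    apply Filter.eventuallyEq_of_mem (Metric.isOpen_ball.mem_nhds he)
    intro e' he'
    exact hrep e' u (htpos e' (habs e' he') u)
end

section
/- First variation of the enclosed area: let x : ℝ → ℝ² be a smooth closed curve and y : ℝ → ℝ² smooth and 1-periodic, and set A(x) = (1/2)∫₀¹ det(x(u), x'(u)) du. Then (d/dε)|_{ε=0} A(x + ε y) = ∫₀¹ det(y(u), x'(u)) du = −∫₀¹ (N(u)·y(u))·|x'(u)| du, where N = (−sin ν, cos ν) is the unit inward normal determined by a tangent-angle lift ν of x; equivalently, A'(Γ(x))y = −∫_Γ N·y ds. -/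
open Real

private lemma hderiv_fst {f : ℝ → ℝ × ℝ} {d : ℝ × ℝ} {u : ℝ}
    (h : HasDerivAt f d u) : HasDerivAt (fun t => (f t).1) d.1 u := by
  simpa using (h.hasFDerivAt.fst).hasDerivAt

private lemma hderiv_snd {f : ℝ → ℝ × ℝ} {d : ℝ × ℝ} {u : ℝ}
    (h : HasDerivAt f d u) : HasDerivAt (fun t => (f t).2) d.2 u := by
  simpa using (h.hasFDerivAt.snd).hasDerivAt

/-- First variation of the enclosed area: for a smooth closed curve `x` with speed `g`
and tangent-angle lift `ν`, and a smooth 1-periodic variation `y`,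
`(d/dε)|₀ A(x + ε y) = ∫₀¹ det(y, x') du = −∫₀¹ (N·y)·|x'| du`, i.e.
`A'(Γ(x))y = −∫_Γ N·y ds`. -/
theorem first_variation_enclosed_area
    (x : ℝ → ℝ × ℝ) (g ν : ℝ → ℝ)
    (hx : ContDiff ℝ (⊤ : ℕ∞) x)
    (hxper : ∀ u, x (u + 1) = x u)
    (hg : ∀ u, 0 < g u)
    (htang : ∀ u, HasDerivAt x (g u • ((Real.cos (ν u), Real.sin (ν u)) : ℝ × ℝ)) u)
    (hνc : Continuous ν)
    (hνper : ∀ u, ν (u + 1) = ν u + 2 * π)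
    (y : ℝ → ℝ × ℝ) (hy : ContDiff ℝ (⊤ : ℕ∞) y) (hyper : ∀ u, y (u + 1) = y u) :
    HasDerivAt (fun ε : ℝ => (1 / 2) * ∫ u in (0:ℝ)..1,
        ((x u + ε • y u).1 * (deriv x u + ε • deriv y u).2 -
          (x u + ε • y u).2 * (deriv x u + ε • deriv y u).1))
      (∫ u in (0:ℝ)..1, ((y u).1 * (deriv x u).2 - (y u).2 * (deriv x u).1)) 0 ∧
    (∫ u in (0:ℝ)..1, ((y u).1 * (deriv x u).2 - (y u).2 * (deriv x u).1)) =
      -∫ u in (0:ℝ)..1,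
        ((-Real.sin (ν u)) * (y u).1 + Real.cos (ν u) * (y u).2) * g u := by
  have hxd : Differentiable ℝ x := hx.differentiable (by simp)
  have hyd : Differentiable ℝ y := hy.differentiable (by simp)
  have hxc : Continuous x := hx.continuous
  have hyc : Continuous y := hy.continuous
  have hx' : Continuous (deriv x) := hx.continuous_deriv (by simp)
  have hy' : Continuous (deriv y) := hy.continuous_deriv (by simp)
  set f0 : ℝ → ℝ := fun u => (x u).1 * (deriv x u).2 - (x u).2 * (deriv x u).1 with hf0
  set f1 : ℝ → ℝ := fun u => (x u).1 * (deriv y u).2 + (y u).1 * (deriv x u).2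
      - (x u).2 * (deriv y u).1 - (y u).2 * (deriv x u).1 with hf1
  set f2 : ℝ → ℝ := fun u => (y u).1 * (deriv y u).2 - (y u).2 * (deriv y u).1 with hf2
  set h : ℝ → ℝ := fun u => (y u).1 * (deriv x u).2 - (y u).2 * (deriv x u).1 with hh
  have hc0 : Continuous f0 := by fun_prop
  have hc1 : Continuous f1 := by fun_prop
  have hc2 : Continuous f2 := by fun_prop
  have hch : Continuous h := by fun_prop
  have hi0 : IntervalIntegrable f0 MeasureTheory.volume 0 1 := hc0.intervalIntegrable _ _
  have hi1 : IntervalIntegrable f1 MeasureTheory.volume 0 1 := hc1.intervalIntegrable _ _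
  have hi2 : IntervalIntegrable f2 MeasureTheory.volume 0 1 := hc2.intervalIntegrable _ _
  -- expansion of the integral as a polynomial in ε
  have key : ∀ ε : ℝ, (∫ u in (0:ℝ)..1,
      ((x u + ε • y u).1 * (deriv x u + ε • deriv y u).2 -
        (x u + ε • y u).2 * (deriv x u + ε • deriv y u).1))
      = (∫ u in (0:ℝ)..1, f0 u) + ε * (∫ u in (0:ℝ)..1, f1 u)
        + ε ^ 2 * (∫ u in (0:ℝ)..1, f2 u) := by
    intro ε
    rw [← intervalIntegral.integral_const_mul, ← intervalIntegral.integral_const_mul,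
        ← intervalIntegral.integral_add hi0 (hi1.const_mul ε),
        ← intervalIntegral.integral_add ((hi0.add (hi1.const_mul ε))) (hi2.const_mul (ε^2))]
    apply intervalIntegral.integral_congr
    intro u _
    simp only [hf0, hf1, hf2, Prod.fst_add, Prod.snd_add, Prod.smul_fst, Prod.smul_snd,
      smul_eq_mul]
    ring
  -- W and its derivative
  have hW : ∀ u : ℝ, HasDerivAt (fun t => (x t).1 * (y t).2 - (x t).2 * (y t).1)
      (f1 u - h u - h u) u := by
    intro u
    have h1 := (hderiv_fst ((hxd u).hasDerivAt)).mul (hderiv_snd ((hyd u).hasDerivAt))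
    have h2 := (hderiv_snd ((hxd u).hasDerivAt)).mul (hderiv_fst ((hyd u).hasDerivAt))
    refine (h1.sub h2).congr_deriv ?_
    simp only [hf1, hh]; ring
  have hWint : (∫ u in (0:ℝ)..1, (f1 u - h u - h u)) = 0 := by
    rw [intervalIntegral.integral_eq_sub_of_hasDerivAt (fun u _ => hW u)
      (((hi1.sub (hch.intervalIntegrable _ _)).sub (hch.intervalIntegrable _ _)))]
    have h1 : x 1 = x 0 := by simpa using hxper 0
    have h2 : y 1 = y 0 := by simpa using hyper 0
    rw [h1, h2]; ring
  have hC1 : (∫ u in (0:ℝ)..1, f1 u) = 2 * ∫ u in (0:ℝ)..1, h u := by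
    have := hWint
    rw [intervalIntegral.integral_sub (hi1.sub (hch.intervalIntegrable _ _))
        (hch.intervalIntegrable _ _),
      intervalIntegral.integral_sub hi1 (hch.intervalIntegrable _ _)] at this
    linarith
  constructor
  · have hpoly : HasDerivAt (fun ε : ℝ => (1 / 2) * ((∫ u in (0:ℝ)..1, f0 u)
        + ε * (∫ u in (0:ℝ)..1, f1 u) + ε ^ 2 * (∫ u in (0:ℝ)..1, f2 u)))
        (∫ u in (0:ℝ)..1, h u) 0 := by
      have h1 := (((hasDerivAt_const (0:ℝ) (∫ u in (0:ℝ)..1, f0 u)).add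
          ((hasDerivAt_id (0:ℝ)).mul_const (∫ u in (0:ℝ)..1, f1 u))).add
          ((hasDerivAt_pow 2 (0:ℝ)).mul_const (∫ u in (0:ℝ)..1, f2 u))).const_mul (1/2 : ℝ)
      refine h1.congr_deriv ?_
      rw [hC1]; push_cast; ring
    exact hpoly.congr_of_eventuallyEq (Filter.Eventually.of_forall fun ε => by
      simp only; rw [key ε])
  · rw [← intervalIntegral.integral_neg]
    apply intervalIntegral.integral_congr
    intro u _
    have hdx : deriv x u = g u • ((Real.cos (ν u), Real.sin (ν u)) : ℝ × ℝ) := (htang u).deriv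
    simp only [hdx, Prod.smul_fst, Prod.smul_snd, smul_eq_mul]
    ring
end
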